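/- arXiv:math/0611735 — 3 statements merged into one kernel-verified Lean document; each statement's English description precedes it below -/
import Mathlib

section
/- Let L ⊂ ℝ^n be a full-rank lattice such that for every real s > n/2 one has ∑_{y ∈ L∖{0}} (y yᵀ)/‖y‖^{2(s+1)} = (ζ(L,s)/n) · I_n. Then all layers of L hold a 2-design, i.e. for every m > 0 with L_m ≠ ∅ and every α ∈ ℝ^n, ∑_{y ∈ L_m} (y·α)² = (m |L_m| / n)(α·α). -/
set_option maxHeartbeats 1000000

open Matrix

/-- Coordinatewise cast of an integer vector to a real vector. -/
def icast {n : ℕ} (x : Fin n → ℤ) : Fin n → ℝ := fun i => (x i : ℝ)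

/-- The lattice vector `P x` for integer coordinates `x`; the lattice `L = Pℤⁿ` is the range. -/
noncomputable def latv {n : ℕ} (P : Matrix (Fin n) (Fin n) ℝ) (x : Fin n → ℤ) : Fin n → ℝ :=
  P.mulVec (icast x)

/-- Epstein zeta function of the lattice `L = Pℤⁿ`:
`ζ(L,s) = ∑_{y ∈ L∖{0}} ‖y‖^{-2s}` (converges for real `s > n/2`). -/
noncomputable def zetaLat {n : ℕ} (P : Matrix (Fin n) (Fin n) ℝ) (s : ℝ) : ℝ :=
  ∑' x : {x : Fin n → ℤ // x ≠ 0}, (latv P x.1 ⬝ᵥ latv P x.1) ^ (-s)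

/-- Integer coordinates of the layer of the lattice `Pℤⁿ` at level `m`,
namely `{y ∈ L : y·y = m}` written in the coordinates `x` with `y = Px`. -/
def layer {n : ℕ} (P : Matrix (Fin n) (Fin n) ℝ) (m : ℝ) : Set (Fin n → ℤ) :=
  {x | latv P x ⬝ᵥ latv P x = m}

namespace D2

variable {n : ℕ}

def Knat (x : Fin n → ℤ) : ℕ := Finset.univ.sup fun i => (x i).natAbs

noncomputable def qf (P : Matrix (Fin n) (Fin n) ℝ) (x : Fin n → ℤ) : ℝ :=
  latv P x ⬝ᵥ latv P x

variable (P : Matrix (Fin n) (Fin n) ℝ)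

lemma qf_eq_sum (x : Fin n → ℤ) : qf P x = ∑ i, (latv P x i) ^ 2 := by
  simp [qf, dotProduct, sq]

lemma qf_nonneg (x : Fin n → ℤ) : 0 ≤ qf P x := by
  rw [qf_eq_sum]; exact Finset.sum_nonneg fun i _ => sq_nonneg _

lemma sq_le_qf (x : Fin n → ℤ) (i : Fin n) : (latv P x i) ^ 2 ≤ qf P x := by
  rw [qf_eq_sum]
  exact Finset.single_le_sum (f := fun j => (latv P x j) ^ 2) (fun j _ => sq_nonneg _) (Finset.mem_univ i)

lemma abs_le_sqrt_qf (x : Fin n → ℤ) (i : Fin n) : |latv P x i| ≤ Real.sqrt (qf P x) := by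
  rw [← Real.sqrt_sq_eq_abs]
  exact Real.sqrt_le_sqrt (sq_le_qf P x i)

lemma latv_zero : latv P 0 = 0 := by
  have : icast (0 : Fin n → ℤ) = 0 := by funext i; simp [icast]
  simp [latv, this]

lemma qf_zero : qf P 0 = 0 := by simp [qf, latv_zero]

lemma Knat_le (x : Fin n → ℤ) (i : Fin n) : (x i).natAbs ≤ Knat x :=
  Finset.le_sup (f := fun i => (x i).natAbs) (Finset.mem_univ i)

lemma one_le_Knat {x : Fin n → ℤ} (hx : x ≠ 0) : 1 ≤ Knat x := by
  obtain ⟨i, hi⟩ : ∃ i, x i ≠ 0 := by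
    by_contra h
    push_neg at h
    exact hx (funext h)
  have : 1 ≤ (x i).natAbs := Int.natAbs_pos.mpr hi
  exact this.trans (Knat_le x i)

lemma icast_eq (hP : IsUnit P.det) (x : Fin n → ℤ) :
    icast x = P⁻¹ *ᵥ latv P x := by
  rw [latv, Matrix.mulVec_mulVec, Matrix.nonsing_inv_mul P hP, Matrix.one_mulVec]

lemma exists_bound (hP : IsUnit P.det) :
    ∃ C : ℝ, 0 < C ∧ ∀ x : Fin n → ℤ, ((Knat x : ℝ)) ^ 2 ≤ C * qf P x := by
  set C₀ : ℝ := ∑ i, ∑ j, |P⁻¹ i j| with hC₀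
  have hC₀0 : 0 ≤ C₀ := Finset.sum_nonneg fun i _ => Finset.sum_nonneg fun j _ => abs_nonneg _
  set C₁ : ℝ := max C₀ 1 with hC₁
  have hC₁1 : (1:ℝ) ≤ C₁ := le_max_right _ _
  have hC₁0 : (0:ℝ) < C₁ := lt_of_lt_of_le one_pos hC₁1
  refine ⟨C₁ ^ 2, by positivity, fun x => ?_⟩
  rcases isEmpty_or_nonempty (Fin n) with hn | hn
  · have : Knat x = 0 := by
      simp [Knat, Finset.univ_eq_empty]
    rw [this]
    have h := qf_nonneg P x
    have : ((0:ℕ):ℝ) ^ 2 = 0 := by norm_num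
    rw [this]
    positivity
  · obtain ⟨i₀, -, hi₀⟩ := Finset.exists_mem_eq_sup Finset.univ Finset.univ_nonempty
      (fun i => (x i).natAbs)
    have key : (Knat x : ℝ) ≤ C₁ * Real.sqrt (qf P x) := by
      have h1 : (Knat x : ℝ) = |((x i₀ : ℤ) : ℝ)| := by
        rw [Knat, hi₀, Nat.cast_natAbs, Int.cast_abs]
      have h2 : ((x i₀ : ℤ) : ℝ) = ∑ j, P⁻¹ i₀ j * latv P x j := by
        have := congrFun (icast_eq P hP x) i₀
        simpa [icast, Matrix.mulVec, dotProduct] using this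
      rw [h1, h2]
      calc |∑ j, P⁻¹ i₀ j * latv P x j| ≤ ∑ j, |P⁻¹ i₀ j * latv P x j| :=
            Finset.abs_sum_le_sum_abs _ _
        _ ≤ ∑ j, |P⁻¹ i₀ j| * Real.sqrt (qf P x) := by
            refine Finset.sum_le_sum fun j _ => ?_
            rw [abs_mul]
            exact mul_le_mul_of_nonneg_left (abs_le_sqrt_qf P x j) (abs_nonneg _)
        _ = (∑ j, |P⁻¹ i₀ j|) * Real.sqrt (qf P x) := by rw [Finset.sum_mul]
        _ ≤ C₁ * Real.sqrt (qf P x) := by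
            refine mul_le_mul_of_nonneg_right ?_ (Real.sqrt_nonneg _)
            refine le_trans ?_ (le_max_left C₀ 1)
            exact Finset.single_le_sum (f := fun i => ∑ j, |P⁻¹ i j|)
              (fun i _ => Finset.sum_nonneg fun j _ => abs_nonneg _) (Finset.mem_univ i₀)
    have hsq : ((Knat x : ℝ)) ^ 2 ≤ (C₁ * Real.sqrt (qf P x)) ^ 2 := by
      have h0 : (0:ℝ) ≤ (Knat x : ℝ) := Nat.cast_nonneg _
      exact pow_le_pow_left₀ h0 key 2
    calc ((Knat x : ℝ)) ^ 2 ≤ (C₁ * Real.sqrt (qf P x)) ^ 2 := hsq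
      _ = C₁ ^ 2 * (Real.sqrt (qf P x)) ^ 2 := by ring
      _ = C₁ ^ 2 * qf P x := by rw [Real.sq_sqrt (qf_nonneg P x)]
lemma qf_pos (hP : IsUnit P.det) {x : Fin n → ℤ} (hx : x ≠ 0) : 0 < qf P x := by
  obtain ⟨C, hC, hb⟩ := exists_bound P hP
  have h1 : (1 : ℝ) ≤ ((Knat x : ℝ)) ^ 2 := by
    have := one_le_Knat hx
    have : (1:ℝ) ≤ (Knat x : ℝ) := by exact_mod_cast this
    nlinarith
  nlinarith [hb x, qf_nonneg P x]

lemma finite_Knat_le (N : ℕ) : {x : Fin n → ℤ | Knat x ≤ N}.Finite := by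
  have hsub : {x : Fin n → ℤ | Knat x ≤ N} ⊆
      Set.pi Set.univ (fun _ : Fin n => Set.Icc (-(N:ℤ)) (N:ℤ)) := by
    intro x hx i _
    have h1 : (x i).natAbs ≤ N := (Knat_le x i).trans hx
    have : |x i| ≤ (N:ℤ) := by
      rw [Int.abs_eq_natAbs]
      exact_mod_cast h1
    exact abs_le.mp this
  exact (Set.Finite.pi fun _ => Set.finite_Icc _ _).subset hsub

lemma finite_sub (hP : IsUnit P.det) (R : ℝ) : {x : Fin n → ℤ | qf P x ≤ R}.Finite := by
  obtain ⟨C, hC, hb⟩ := exists_bound P hP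
  set N : ℕ := ⌈Real.sqrt (C * R)⌉₊ with hN
  apply (finite_Knat_le (n := n) N).subset
  intro x hx
  have hx' : qf P x ≤ R := hx
  have h1 : ((Knat x : ℝ)) ^ 2 ≤ C * R :=
    le_trans (hb x) (mul_le_mul_of_nonneg_left hx' hC.le)
  have h2 : (Knat x : ℝ) ≤ Real.sqrt (C * R) := by
    rw [← Real.sqrt_sq (Nat.cast_nonneg (Knat x))]
    exact Real.sqrt_le_sqrt h1
  have h3 : (Knat x : ℝ) ≤ (N : ℝ) := le_trans h2 (Nat.le_ceil _)
  exact_mod_cast h3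

lemma finite_layer (hP : IsUnit P.det) (m : ℝ) : (layer P m).Finite := by
  have : layer P m ⊆ {x : Fin n → ℤ | qf P x ≤ m} := fun x hx => le_of_eq hx
  exact (finite_sub P hP m).subset this

def fib (k : ℕ) : Set {x : Fin n → ℤ // x ≠ 0} := {x | Knat x.1 = k}

lemma finite_fib (k : ℕ) : (fib (n := n) k).Finite := by
  have hss : ((↑) '' (fib (n := n) k) : Set (Fin n → ℤ)) ⊆ {x | Knat x ≤ k} := by
    rintro _ ⟨x, hx, rfl⟩; exact le_of_eq hx
  have h2 := (finite_Knat_le (n := n) k).subset hss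
  exact Set.Finite.of_finite_image h2 (Subtype.val_injective.injOn)

abbrev sphType (n k : ℕ) : Type :=
  Σ i : Fin n, Bool × ({j : Fin n // j ≠ i} → (Finset.Icc (-(k:ℤ)) (k:ℤ)))

lemma card_sphType (n k : ℕ) : Fintype.card (sphType n k) = n * (2 * (2*k+1)^(n-1)) := by
  have h1 : ∀ i : Fin n, Fintype.card (Bool × ({j : Fin n // j ≠ i} → (Finset.Icc (-(k:ℤ)) (k:ℤ))))
      = 2 * (2*k+1)^(n-1) := by
    intro i
    rw [Fintype.card_prod, Fintype.card_bool, Fintype.card_fun, Fintype.card_coe, Int.card_Icc]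
    have h2 : Fintype.card {j : Fin n // j ≠ i} = n - 1 := by
      rw [Fintype.card_subtype_compl, Fintype.card_subtype_eq, Fintype.card_fin]
    rw [h2]
    congr 2
    omega
  have h0 : Fintype.card (sphType n k) = ∑ i : Fin n,
      Fintype.card (Bool × ({j : Fin n // j ≠ i} → (Finset.Icc (-(k:ℤ)) (k:ℤ)))) :=
    Fintype.card_sigma
  rw [h0]
  simp only [h1, Finset.sum_const, Finset.card_univ, Fintype.card_fin, smul_eq_mul]

def phi {n k : ℕ} (x : Fin n → ℤ) (hx : ∀ j, x j ∈ Finset.Icc (-(k:ℤ)) (k:ℤ)) (i₀ : Fin n) :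
    sphType n k :=
  ⟨i₀, (decide (0 ≤ x i₀), fun j => ⟨x j.1, hx j.1⟩)⟩

def psi {n k : ℕ} (p : sphType n k) : Fin n → ℤ := fun j =>
  if h : j = p.1 then (if p.2.1 then (k:ℤ) else -(k:ℤ)) else (p.2.2 ⟨j, h⟩ : ℤ)

lemma psi_phi {n k : ℕ} (x : Fin n → ℤ) (hx : ∀ j, x j ∈ Finset.Icc (-(k:ℤ)) (k:ℤ))
    (i₀ : Fin n) (hi₀ : (x i₀).natAbs = k) : psi (phi x hx i₀) = x := by
  funext j
  by_cases h : j = i₀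
  · subst h
    have : psi (phi x hx j) j = (if decide (0 ≤ x j) then (k:ℤ) else -(k:ℤ)) := by
      simp [psi, phi]
    rw [this]
    by_cases hpos : 0 ≤ x j
    · rw [if_pos (by simpa using hpos)]; omega
    · rw [if_neg (by simpa using hpos)]; omega
  · simp [psi, phi, h]

lemma card_fib {k : ℕ} (hk : 1 ≤ k) :
    Nat.card (fib (n := n) k) ≤ n * (2 * (2*k+1)^(n-1)) := by
  rcases isEmpty_or_nonempty (Fin n) with hn | hn
  · have : IsEmpty (fib (n := n) k) := by
      constructor; rintro ⟨⟨x, hx⟩, -⟩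
      exact hx (funext fun i => (IsEmpty.false i).elim)
    simp [Nat.card_of_isEmpty]
  · have mem : ∀ (x : fib (n := n) k), ∀ j, x.1.1 j ∈ Finset.Icc (-(k:ℤ)) (k:ℤ) := by
      rintro ⟨⟨x, hx⟩, hxk⟩ j
      have hxk' : Knat x = k := hxk
      have h1 : (x j).natAbs ≤ k := hxk' ▸ Knat_le x j
      rw [Finset.mem_Icc]
      show -(k:ℤ) ≤ x j ∧ x j ≤ (k:ℤ)
      omega
    have hexists : ∀ (x : fib (n := n) k), ∃ i, (x.1.1 i).natAbs = k := by
      rintro ⟨⟨x, hx⟩, hxk⟩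
      obtain ⟨i, -, hi⟩ := Finset.exists_mem_eq_sup Finset.univ Finset.univ_nonempty
        (fun i => (x i).natAbs)
      refine ⟨i, ?_⟩
      have hxk' : Knat x = k := hxk
      rw [← hi]
      exact hxk'
    classical
    have hinj : Function.Injective (fun x : fib (n := n) k =>
        phi x.1.1 (mem x) (Classical.choose (hexists x))) := by
      intro x y hxy
      have hx' := psi_phi x.1.1 (mem x) _ (Classical.choose_spec (hexists x))
      have hy' := psi_phi y.1.1 (mem y) _ (Classical.choose_spec (hexists y))
      have : x.1.1 = y.1.1 := by
        rw [← hx', ← hy']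
        exact congrArg psi hxy
      exact Subtype.ext (Subtype.ext this)
    calc Nat.card (fib (n := n) k) ≤ Nat.card (sphType n k) :=
          Nat.card_le_card_of_injective _ hinj
      _ = n * (2 * (2*k+1)^(n-1)) := by rw [Nat.card_eq_fintype_card, card_sphType]
lemma summable_Knat {r : ℝ} (hr : (n : ℝ) < r) :
    Summable fun x : {x : Fin n → ℤ // x ≠ 0} => (Knat x.1 : ℝ) ^ (-r) := by
  rcases Nat.eq_zero_or_pos n with rfl | hn1
  · have : IsEmpty {x : Fin 0 → ℤ // x ≠ 0} :=
      ⟨fun x => x.2 (funext fun i => i.elim0)⟩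
    exact Summable.of_finite
  have hnonneg : 0 ≤ fun x : {x : Fin n → ℤ // x ≠ 0} => (Knat x.1 : ℝ) ^ (-r) := by
    intro x; positivity
  rw [summable_partition hnonneg (s := fun k => fib (n := n) k)
    (fun x => ⟨Knat x.1, rfl, fun k hk => hk.symm⟩)]
  constructor
  · intro k
    have := (finite_fib (n := n) k).to_subtype
    exact Summable.of_finite
  · -- ∑' x : fib k, (Knat x.1)^(-r), bounded by A * k^(n-1-r)
    have hconst : ∀ k : ℕ, (∑' x : fib (n := n) k, (Knat x.1.1 : ℝ) ^ (-r))
        = (Nat.card (fib (n := n) k) : ℝ) * (k : ℝ) ^ (-r) := by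
      intro k
      have : ∀ x : fib (n := n) k, (Knat x.1.1 : ℝ) ^ (-r) = (k : ℝ) ^ (-r) := by
        rintro ⟨x, hxk⟩
        have : Knat x.1 = k := hxk
        rw [this]
      rw [tsum_congr this, tsum_const, nsmul_eq_mul]
    set A : ℝ := (n : ℝ) * (2 * 3 ^ (n-1)) with hA
    have hA0 : 0 ≤ A := by positivity
    have hmaj : Summable fun k : ℕ => A * (k : ℝ) ^ ((n : ℝ) - 1 - r) :=
      (Real.summable_nat_rpow.mpr (by linarith)).mul_left A
    apply Summable.of_nonneg_of_le (fun k => ?_) (fun k => ?_) hmaj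
    · rw [hconst]; positivity
    · rw [hconst]
      rcases Nat.eq_zero_or_pos k with rfl | hk
    -- k = 0 : fiber empty
      · have : (fib (n := n) 0) = ∅ := by
          ext x
          simp only [fib, Set.mem_setOf_eq, Set.mem_empty_iff_false, iff_false]
          intro h0
          exact absurd (h0 ▸ one_le_Knat x.2) (by norm_num)
        rw [this]
        simp only [Nat.card_eq_fintype_card]
        rw [Fintype.card_eq_zero]
        simp only [Nat.cast_zero, zero_mul]
        positivity
      · have hcard : (Nat.card (fib (n := n) k) : ℝ) ≤ (n : ℝ) * (2 * (2*(k:ℝ)+1)^(n-1)) := by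
          have := card_fib (n := n) hk
          calc (Nat.card (fib (n := n) k) : ℝ) ≤ ((n * (2 * (2*k+1)^(n-1)) : ℕ) : ℝ) := by
                exact_mod_cast this
            _ = (n : ℝ) * (2 * (2*(k:ℝ)+1)^(n-1)) := by push_cast; ring
        have hk1 : (1:ℝ) ≤ (k:ℝ) := by exact_mod_cast hk
        have hkpos : (0:ℝ) < (k:ℝ) := by linarith
        have h31 : (2*(k:ℝ)+1)^(n-1) ≤ (3*(k:ℝ))^(n-1) := by
          apply pow_le_pow_left₀ (by linarith) (by linarith)
        calc (Nat.card (fib (n := n) k) : ℝ) * (k : ℝ) ^ (-r)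
            ≤ ((n : ℝ) * (2 * (3*(k:ℝ))^(n-1))) * (k : ℝ) ^ (-r) := by
              apply mul_le_mul_of_nonneg_right _ (by positivity)
              calc (Nat.card (fib (n := n) k) : ℝ) ≤ (n : ℝ) * (2 * (2*(k:ℝ)+1)^(n-1)) := hcard
                _ ≤ (n : ℝ) * (2 * (3*(k:ℝ))^(n-1)) := by
                    apply mul_le_mul_of_nonneg_left _ (by positivity)
                    linarith
          _ = A * ((k:ℝ)^((n:ℕ)-1:ℕ) * (k : ℝ) ^ (-r)) := by
              rw [hA, mul_pow]
              ring
          _ = A * (k : ℝ) ^ ((n : ℝ) - 1 - r) := by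
              congr 1
              rw [← Real.rpow_natCast (k:ℝ) ((n:ℕ)-1:ℕ), ← Real.rpow_add hkpos]
              congr 1
              push_cast [Nat.cast_sub hn1]
              ring
lemma summable_qf (hP : IsUnit P.det) {s : ℝ} (hs : (n : ℝ) / 2 < s) :
    Summable fun x : {x : Fin n → ℤ // x ≠ 0} => qf P x.1 ^ (-s) := by
  obtain ⟨C, hC, hb⟩ := exists_bound P hP
  have hs0 : 0 ≤ s := le_of_lt (lt_of_le_of_lt (by positivity) hs)
  have hr : (n : ℝ) < 2 * s := by linarith
  refine Summable.of_nonneg_of_le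
    (fun x => Real.rpow_nonneg (qf_nonneg P x.1) _) (fun x => ?_)
    ((summable_Knat (n := n) hr).mul_left (C ^ s))
  have hK1 : (1:ℝ) ≤ (Knat x.1 : ℝ) := by exact_mod_cast one_le_Knat x.2
  have hKpos : (0:ℝ) < (Knat x.1 : ℝ) := by linarith
  have hqpos := qf_pos P hP x.2
  have hlow : (Knat x.1 : ℝ) ^ (2:ℕ) / C ≤ qf P x.1 := by
    rw [div_le_iff₀' hC]; exact hb x.1
  have hlowpos : 0 < (Knat x.1 : ℝ) ^ (2:ℕ) / C := by positivity
  calc qf P x.1 ^ (-s) ≤ ((Knat x.1 : ℝ) ^ (2:ℕ) / C) ^ (-s) :=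
        Real.rpow_le_rpow_of_nonpos hlowpos hlow (neg_nonpos.mpr hs0)
    _ = C ^ s * (Knat x.1 : ℝ) ^ (-(2 * s)) := by
        rw [Real.div_rpow (by positivity) hC.le, ← Real.rpow_natCast (Knat x.1 : ℝ) 2,
          ← Real.rpow_mul hKpos.le, Real.rpow_neg hC.le]
        rw [div_eq_mul_inv, inv_inv, mul_comm]
        congr 2
        push_cast
        ring
lemma rpow_negsucc_mul {a : ℝ} (ha : 0 < a) (s : ℝ) : a ^ (-(s+1)) * a = a ^ (-s) := by
  nth_rewrite 2 [← Real.rpow_one a]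
  rw [← Real.rpow_add ha]
  norm_num

lemma abs_mul_le_qf (x : Fin n → ℤ) (i j : Fin n) :
    |latv P x i * latv P x j| ≤ qf P x := by
  rw [abs_mul]
  calc |latv P x i| * |latv P x j| ≤ Real.sqrt (qf P x) * Real.sqrt (qf P x) :=
        mul_le_mul (abs_le_sqrt_qf P x i) (abs_le_sqrt_qf P x j) (abs_nonneg _) (Real.sqrt_nonneg _)
    _ = qf P x := Real.mul_self_sqrt (qf_nonneg P x)

lemma summable_entry (hP : IsUnit P.det) {s : ℝ} (hs : (n : ℝ) / 2 < s) (i j : Fin n) :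
    Summable fun x : {x : Fin n → ℤ // x ≠ 0} =>
      qf P x.1 ^ (-(s+1)) * (latv P x.1 i * latv P x.1 j) := by
  apply Summable.of_norm_bounded (summable_qf P hP hs)
  intro x
  have hq := qf_pos P hP x.2
  rw [norm_mul, Real.norm_rpow_of_nonneg hq.le, Real.norm_of_nonneg hq.le]
  calc qf P x.1 ^ (-(s+1)) * ‖latv P x.1 i * latv P x.1 j‖
      ≤ qf P x.1 ^ (-(s+1)) * qf P x.1 := by
        apply mul_le_mul_of_nonneg_left _ (Real.rpow_nonneg hq.le _)
        exact abs_mul_le_qf P x.1 i j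
    _ = qf P x.1 ^ (-s) := rpow_negsucc_mul hq s

lemma cs_bound (α : Fin n → ℝ) (x : Fin n → ℤ) :
    (latv P x ⬝ᵥ α) ^ 2 ≤ qf P x * (α ⬝ᵥ α) := by
  have := Finset.sum_mul_sq_le_sq_mul_sq Finset.univ (latv P x) α
  simpa [qf, dotProduct, sq] using this

lemma key_scalar (hP : IsUnit P.det) {s : ℝ} (hs : (n : ℝ) / 2 < s) (α : Fin n → ℝ)
    (hid1 : (∑' x : {x : Fin n → ℤ // x ≠ 0},
        ((latv P x.1 ⬝ᵥ latv P x.1) ^ (-(s + 1))) • vecMulVec (latv P x.1) (latv P x.1))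
      = (zetaLat P s / (n : ℝ)) • (1 : Matrix (Fin n) (Fin n) ℝ)) :
    ∑' x : {x : Fin n → ℤ // x ≠ 0}, qf P x.1 ^ (-(s+1)) * (latv P x.1 ⬝ᵥ α) ^ 2
      = zetaLat P s / (n : ℝ) * (α ⬝ᵥ α) := by
  classical
  set e : {x : Fin n → ℤ // x ≠ 0} → Matrix (Fin n) (Fin n) ℝ := fun x =>
    ((latv P x.1 ⬝ᵥ latv P x.1) ^ (-(s + 1))) • vecMulVec (latv P x.1) (latv P x.1) with he
  have hent : ∀ i j, Summable fun x : {x : Fin n → ℤ // x ≠ 0} => e x i j := by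
    intro i j
    apply (summable_entry P hP hs i j).congr
    intro x
    simp [he, vecMulVec_apply, qf]
  have hrow : ∀ i, Summable fun x : {x : Fin n → ℤ // x ≠ 0} => e x i :=
    fun i => Pi.summable.mpr fun j => hent i j
  have hmat : Summable e := Pi.summable.mpr hrow
  have hTij : ∀ i j, (∑' x, e x i j) = (zetaLat P s / (n : ℝ)) * (1 : Matrix (Fin n) (Fin n) ℝ) i j := by
    intro i j
    have h1 : (∑' x, e x) i = ∑' x, e x i := tsum_apply hmat
    have h2 : (∑' x, e x i) j = ∑' x, e x i j := tsum_apply (hrow i)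
    rw [← h2, ← h1, he, hid1]
    simp [Matrix.smul_apply]
  -- expand the square
  have hexp : ∀ x : {x : Fin n → ℤ // x ≠ 0},
      qf P x.1 ^ (-(s+1)) * (latv P x.1 ⬝ᵥ α) ^ 2
        = ∑ i, ∑ j, (α i * α j) * e x i j := by
    intro x
    have : (latv P x.1 ⬝ᵥ α) ^ 2 = ∑ i, ∑ j, (latv P x.1 i * α i) * (latv P x.1 j * α j) := by
      rw [sq, dotProduct, Finset.sum_mul_sum]
    rw [this, Finset.mul_sum]
    refine Finset.sum_congr rfl fun i _ => ?_
    rw [Finset.mul_sum]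
    refine Finset.sum_congr rfl fun j _ => ?_
    simp only [he, Matrix.smul_apply, vecMulVec_apply, smul_eq_mul, qf]
    ring
  calc ∑' x : {x : Fin n → ℤ // x ≠ 0}, qf P x.1 ^ (-(s+1)) * (latv P x.1 ⬝ᵥ α) ^ 2
      = ∑' x : {x : Fin n → ℤ // x ≠ 0}, ∑ i, ∑ j, (α i * α j) * e x i j :=
        tsum_congr hexp
    _ = ∑ i, ∑' x : {x : Fin n → ℤ // x ≠ 0}, ∑ j, (α i * α j) * e x i j := by
        apply Summable.tsum_finsetSum
        intro i _
        exact summable_sum fun j _ => (hent i j).mul_left _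
    _ = ∑ i, ∑ j, ∑' x : {x : Fin n → ℤ // x ≠ 0}, (α i * α j) * e x i j := by
        refine Finset.sum_congr rfl fun i _ => ?_
        apply Summable.tsum_finsetSum
        intro j _
        exact (hent i j).mul_left _
    _ = ∑ i, ∑ j, (α i * α j) * ((zetaLat P s / (n : ℝ)) * (1 : Matrix (Fin n) (Fin n) ℝ) i j) := by
        refine Finset.sum_congr rfl fun i _ => ?_
        refine Finset.sum_congr rfl fun j _ => ?_
        rw [tsum_mul_left, hTij i j]
    _ = zetaLat P s / (n : ℝ) * (α ⬝ᵥ α) := by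
        simp only [Matrix.one_apply, mul_ite, mul_one, mul_zero]
        rw [dotProduct, Finset.mul_sum]
        refine Finset.sum_congr rfl fun i _ => ?_
        rw [Finset.sum_ite_eq Finset.univ i (fun j => α i * α j * (zetaLat P s / ↑n))]
        simp only [Finset.mem_univ, if_pos]
        ring
lemma summable_part1 (hP : IsUnit P.det) {s : ℝ} (hs : (n : ℝ) / 2 < s) (α : Fin n → ℝ) :
    Summable fun x : {x : Fin n → ℤ // x ≠ 0} =>
      qf P x.1 ^ (-(s+1)) * (latv P x.1 ⬝ᵥ α) ^ 2 := by
  refine Summable.of_nonneg_of_le (fun x => ?_) (fun x => ?_)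
    ((summable_qf P hP hs).mul_left (α ⬝ᵥ α))
  · have := qf_pos P hP x.2
    positivity
  · have hq := qf_pos P hP x.2
    calc qf P x.1 ^ (-(s+1)) * (latv P x.1 ⬝ᵥ α) ^ 2
        ≤ qf P x.1 ^ (-(s+1)) * (qf P x.1 * (α ⬝ᵥ α)) :=
          mul_le_mul_of_nonneg_left (cs_bound P α x.1) (Real.rpow_nonneg hq.le _)
      _ = (α ⬝ᵥ α) * (qf P x.1 ^ (-s)) := by
          rw [← mul_assoc, rpow_negsucc_mul hq s]
          ring

lemma summable_part2 (hP : IsUnit P.det) {s : ℝ} (hs : (n : ℝ) / 2 < s) (c : ℝ) :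
    Summable fun x : {x : Fin n → ℤ // x ≠ 0} =>
      qf P x.1 ^ (-(s+1)) * (qf P x.1 * c) := by
  apply ((summable_qf P hP hs).mul_left c).congr
  intro x
  have hq := qf_pos P hP x.2
  rw [← mul_assoc, rpow_negsucc_mul hq s]
  ring

lemma zetaLat_eq (s : ℝ) : zetaLat P s = ∑' x : {x : Fin n → ℤ // x ≠ 0}, qf P x.1 ^ (-s) := rfl

lemma summable_h (hP : IsUnit P.det) {s : ℝ} (hs : (n : ℝ) / 2 < s) (α : Fin n → ℝ) :
    Summable fun x : {x : Fin n → ℤ // x ≠ 0} =>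
      qf P x.1 ^ (-(s+1)) * ((latv P x.1 ⬝ᵥ α) ^ 2 - qf P x.1 * ((α ⬝ᵥ α) / (n:ℝ))) := by
  apply Summable.congr ((summable_part1 P hP hs α).sub (summable_part2 P hP hs ((α ⬝ᵥ α) / (n:ℝ))))
  intro x
  ring

lemma G_zero (hP : IsUnit P.det) {s : ℝ} (hs : (n : ℝ) / 2 < s) (α : Fin n → ℝ)
    (hid1 : (∑' x : {x : Fin n → ℤ // x ≠ 0},
        ((latv P x.1 ⬝ᵥ latv P x.1) ^ (-(s + 1))) • vecMulVec (latv P x.1) (latv P x.1))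
      = (zetaLat P s / (n : ℝ)) • (1 : Matrix (Fin n) (Fin n) ℝ)) :
    ∑' x : {x : Fin n → ℤ // x ≠ 0},
      qf P x.1 ^ (-(s+1)) * ((latv P x.1 ⬝ᵥ α) ^ 2 - qf P x.1 * ((α ⬝ᵥ α) / (n:ℝ))) = 0 := by
  have h1 := key_scalar P hP hs α hid1
  have h2 : ∑' x : {x : Fin n → ℤ // x ≠ 0}, qf P x.1 ^ (-(s+1)) * (qf P x.1 * ((α ⬝ᵥ α)/(n:ℝ)))
      = (α ⬝ᵥ α)/(n:ℝ) * zetaLat P s := by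
    rw [zetaLat_eq, ← tsum_mul_left]
    apply tsum_congr
    intro x
    have hq := qf_pos P hP x.2
    rw [← mul_assoc, rpow_negsucc_mul hq s]
    ring
  calc ∑' x : {x : Fin n → ℤ // x ≠ 0},
      qf P x.1 ^ (-(s+1)) * ((latv P x.1 ⬝ᵥ α) ^ 2 - qf P x.1 * ((α ⬝ᵥ α) / (n:ℝ)))
      = ∑' x : {x : Fin n → ℤ // x ≠ 0},
        (qf P x.1 ^ (-(s+1)) * (latv P x.1 ⬝ᵥ α) ^ 2
          - qf P x.1 ^ (-(s+1)) * (qf P x.1 * ((α ⬝ᵥ α)/(n:ℝ)))) := by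
        apply tsum_congr; intro x; ring
    _ = (∑' x : {x : Fin n → ℤ // x ≠ 0}, qf P x.1 ^ (-(s+1)) * (latv P x.1 ⬝ᵥ α) ^ 2)
        - ∑' x : {x : Fin n → ℤ // x ≠ 0}, qf P x.1 ^ (-(s+1)) * (qf P x.1 * ((α ⬝ᵥ α)/(n:ℝ))) :=
        Summable.tsum_sub (summable_part1 P hP hs α) (summable_part2 P hP hs _)
    _ = 0 := by rw [h1, h2]; ring
lemma tsum_set_eq_sum {β : Type*} {S : Set β} (hS : S.Finite) (f : β → ℝ) :
    ∑' x : S, f x.1 = ∑ x ∈ hS.toFinset, f x := by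
  haveI := hS.fintype
  rw [tsum_fintype, ← Finset.sum_coe_sort (hS.toFinset) f]
  exact Fintype.sum_equiv (Equiv.subtypeEquivRight (by simp)) _ _ (fun x => rfl)

lemma claim (hP : IsUnit P.det)
    (hid : ∀ s : ℝ, (n : ℝ) / 2 < s →
      (∑' x : {x : Fin n → ℤ // x ≠ 0},
          ((latv P x.1 ⬝ᵥ latv P x.1) ^ (-(s + 1))) • vecMulVec (latv P x.1) (latv P x.1))
        = (zetaLat P s / (n : ℝ)) • (1 : Matrix (Fin n) (Fin n) ℝ))
    (α : Fin n → ℝ) :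
    ∀ N : ℕ, ∀ m : ℝ, 0 < m → ({x : Fin n → ℤ | x ≠ 0 ∧ qf P x < m}).ncard ≤ N →
      ∑ x ∈ (finite_layer P hP m).toFinset,
        ((latv P x ⬝ᵥ α) ^ 2 - qf P x * ((α ⬝ᵥ α) / (n:ℝ))) = 0 := by
  classical
  intro N
  induction N using Nat.strong_induction_on with
  | _ N IH =>
  intro m hm hcard
  rcases Nat.eq_zero_or_pos n with hn0 | hn1
  · subst hn0
    have hempty : (finite_layer P hP m).toFinset = ∅ := by
      ext x
      simp only [Set.Finite.mem_toFinset, Finset.notMem_empty, iff_false]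
      intro hx
      have h0 : x = 0 := funext fun i => i.elim0
      have : qf P x = m := hx
      rw [h0, qf_zero] at this
      linarith
    rw [hempty, Finset.sum_empty]
  -- abbreviations
  set d : ℝ := α ⬝ᵥ α with hd
  have hd0 : 0 ≤ d := Finset.sum_nonneg fun i _ => mul_self_nonneg _
  set h' : (Fin n → ℤ) → ℝ := fun x => (latv P x ⬝ᵥ α) ^ 2 - qf P x * (d / (n:ℝ)) with hh'
  set Am : ℝ := ∑ x ∈ (finite_layer P hP m).toFinset, h' x with hAm
  set Sset : Set (Fin n → ℤ) := {x | x ≠ 0 ∧ qf P x < m} with hSset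
  have hSfin : Sset.Finite := by
    apply (finite_sub P hP m).subset
    rintro x ⟨-, hx2⟩
    exact le_of_lt hx2
  set T1 : Set {x : Fin n → ℤ // x ≠ 0} := {x | qf P x.1 < m} with hT1
  set T2 : Set ↥(T1ᶜ) := {y | qf P y.1.1 = m} with hT2
  -- master identity for each admissible s
  have master : ∀ s : ℝ, (n : ℝ) / 2 < s →
      (m : ℝ) ^ (-(s+1)) * Am
        + ∑' z : ↥(T2ᶜ), qf P z.1.1.1 ^ (-(s+1)) * h' z.1.1.1 = 0 := by
    intro s hs
    set f : {x : Fin n → ℤ // x ≠ 0} → ℝ := fun x => qf P x.1 ^ (-(s+1)) * h' x.1 with hf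
    have hsum : Summable f := summable_h P hP hs α
    have hG : ∑' x, f x = 0 := G_zero P hP hs α (hid s hs)
    have hsplit1 : (∑' x : T1, f x.1) + (∑' x : ↥(T1ᶜ), f x.1) = ∑' x, f x :=
      Summable.tsum_subtype_add_tsum_subtype_compl hsum T1
    -- first part vanishes by induction hypothesis
    have hT1val : (∑' x : T1, f x.1) = 0 := by
      let e1 : ↥T1 ≃ ↥Sset :=
        ⟨fun y => ⟨y.1.1, y.1.2, y.2⟩, fun z => ⟨⟨z.1, z.2.1⟩, z.2.2⟩,
          fun y => rfl, fun z => rfl⟩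
      have he1 : (∑' x : T1, f x.1) = ∑' z : Sset, qf P z.1 ^ (-(s+1)) * h' z.1 := by
        rw [← Equiv.tsum_eq e1 (fun z : Sset => qf P z.1 ^ (-(s+1)) * h' z.1)]
        exact tsum_congr fun c => by rw [hf]; rfl
      have hbase : (∑' z : Sset, qf P z.1 ^ (-(s+1)) * h' z.1)
          = ∑ x ∈ hSfin.toFinset, qf P x ^ (-(s+1)) * h' x := by
        exact tsum_set_eq_sum hSfin (fun b => qf P b ^ (-(s+1)) * h' b)
      rw [he1, hbase]
      set F1 := hSfin.toFinset with hF1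
      have hgrp : ∑ x ∈ F1, qf P x ^ (-(s+1)) * h' x
          = ∑ v ∈ F1.image (qf P), ∑ x ∈ F1.filter (fun x => qf P x = v),
              qf P x ^ (-(s+1)) * h' x := by
        rw [Finset.sum_fiberwise_eq_sum_filter F1 (F1.image (qf P)) (qf P)
          (fun x => qf P x ^ (-(s+1)) * h' x)]
        congr 1
        ext x
        simp only [Finset.mem_filter, Finset.mem_image]
        exact ⟨fun hx => ⟨hx, x, hx, rfl⟩, fun hx => hx.1⟩
      rw [hgrp]
      apply Finset.sum_eq_zero
      intro v hv
      obtain ⟨x₀, hx₀F, hx₀v⟩ := Finset.mem_image.mp hv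
      have hx₀S : x₀ ∈ Sset := hSfin.mem_toFinset.mp hx₀F
      have hv0 : 0 < v := hx₀v ▸ qf_pos P hP hx₀S.1
      have hvm : v < m := hx₀v ▸ hx₀S.2
      have hfilter : F1.filter (fun x => qf P x = v) = (finite_layer P hP v).toFinset := by
        ext x
        simp only [Finset.mem_filter, Set.Finite.mem_toFinset]
        constructor
        · rintro ⟨-, hqv⟩
          exact hqv
        · intro hqv
          have hqv' : qf P x = v := hqv
          have hxne : x ≠ 0 := by
            intro h0
            rw [h0, qf_zero] at hqv'
            linarith
          exact ⟨hSfin.mem_toFinset.mpr ⟨hxne, by rw [hqv']; exact hvm⟩, hqv'⟩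
      rw [hfilter]
      have hAv : ∑ x ∈ (finite_layer P hP v).toFinset, h' x = 0 := by
        apply IH (({x : Fin n → ℤ | x ≠ 0 ∧ qf P x < v}).ncard) _ v hv0 le_rfl
        calc ({x : Fin n → ℤ | x ≠ 0 ∧ qf P x < v}).ncard < Sset.ncard := by
              apply Set.ncard_lt_ncard _ hSfin
              constructor
              · rintro x ⟨hx1, hx2⟩
                exact ⟨hx1, lt_trans hx2 hvm⟩
              · intro hsub
                have hmem := hsub hx₀S
                have : qf P x₀ < v := hmem.2
                rw [hx₀v] at this
                exact absurd this (lt_irrefl v)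
          _ ≤ N := hcard
      calc ∑ x ∈ (finite_layer P hP v).toFinset, qf P x ^ (-(s+1)) * h' x
          = ∑ x ∈ (finite_layer P hP v).toFinset, v ^ (-(s+1)) * h' x := by
            apply Finset.sum_congr rfl
            intro x hx
            have : qf P x = v := (finite_layer P hP v).mem_toFinset.mp hx
            rw [this]
        _ = v ^ (-(s+1)) * ∑ x ∈ (finite_layer P hP v).toFinset, h' x := by
            rw [Finset.mul_sum]
        _ = 0 := by rw [hAv, mul_zero]
    -- second split
    set g : ↥(T1ᶜ) → ℝ := fun y => f y.1 with hg
    have hsumg : Summable g := hsum.subtype _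
    have hsplit2 : (∑' z : T2, g z.1) + (∑' z : ↥(T2ᶜ), g z.1) = ∑' y, g y :=
      Summable.tsum_subtype_add_tsum_subtype_compl hsumg T2
    have hT2val : (∑' z : T2, g z.1) = (m : ℝ) ^ (-(s+1)) * Am := by
      let e2 : ↥T2 ≃ ↥(layer P m) :=
        ⟨fun z => ⟨z.1.1.1, z.2⟩,
         fun x => ⟨⟨⟨x.1, fun h0 => by
            have hq : qf P x.1 = m := x.2
            rw [h0, qf_zero] at hq; linarith⟩,
            fun hlt => by
              have hql : qf P (x.1 : Fin n → ℤ) < m := hlt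
              have hq : qf P x.1 = m := x.2
              linarith⟩, x.2⟩,
         fun z => rfl, fun x => rfl⟩
      have he2 : (∑' z : T2, g z.1) = ∑' x : ↥(layer P m), qf P x.1 ^ (-(s+1)) * h' x.1 := by
        rw [← Equiv.tsum_eq e2 (fun x : ↥(layer P m) => qf P x.1 ^ (-(s+1)) * h' x.1)]
        exact tsum_congr fun c => by rw [hg, hf]; rfl
      have hbase2 : (∑' x : ↥(layer P m), qf P x.1 ^ (-(s+1)) * h' x.1)
          = ∑ x ∈ (finite_layer P hP m).toFinset, qf P x ^ (-(s+1)) * h' x := by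
        exact tsum_set_eq_sum (finite_layer P hP m) (fun b => qf P b ^ (-(s+1)) * h' b)
      rw [he2, hbase2]
      rw [hAm, Finset.mul_sum]
      apply Finset.sum_congr rfl
      intro x hx
      have : qf P x = m := (finite_layer P hP m).mem_toFinset.mp hx
      rw [this]
    rw [hT1val, zero_add] at hsplit1
    rw [hT2val] at hsplit2
    rw [← hG, ← hsplit1, ← hsplit2]
  -- conclude Am = 0 by letting s → ∞
  show Am = 0
  set s₀ : ℝ := (n : ℝ) + 1 with hs₀
  have hs₀ok : (n : ℝ) / 2 < s₀ := by
    have : (0:ℝ) ≤ (n:ℝ) := Nat.cast_nonneg n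
    rw [hs₀]; linarith
  rcases isEmpty_or_nonempty ↥(T2ᶜ) with hT3 | hT3
  · have h1 := master s₀ hs₀ok
    rw [tsum_empty, add_zero] at h1
    have hpow : (0:ℝ) < m ^ (-(s₀+1)) := Real.rpow_pos_of_pos hm _
    rcases mul_eq_zero.mp h1 with h | h
    · exact absurd h hpow.ne'
    · exact h
  · obtain ⟨y₀⟩ := hT3
    have hy₀gt : m < qf P y₀.1.1.1 := by
      have h1 : ¬ (qf P y₀.1.1.1 < m) := y₀.1.2
      have h2 : ¬ (qf P y₀.1.1.1 = m) := y₀.2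
      rcases lt_trichotomy (qf P y₀.1.1.1) m with h | h | h
      · exact absurd h h1
      · exact absurd h h2
      · exact h
    set v₀ : ℝ := qf P y₀.1.1.1 with hv₀
    set Fb : Finset ℝ :=
      ((finite_sub P hP v₀).toFinset.filter (fun x => m < qf P x)).image (qf P) with hFb
    have hFbne : Fb.Nonempty := by
      refine ⟨v₀, Finset.mem_image.mpr ⟨y₀.1.1.1, ?_, rfl⟩⟩
      rw [Finset.mem_filter, Set.Finite.mem_toFinset]
      exact ⟨hv₀.ge, hy₀gt⟩
    set m₁ : ℝ := Fb.min' hFbne with hm₁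
    have hm₁mem : m₁ ∈ Fb := Finset.min'_mem _ _
    have hm₁gt : m < m₁ := by
      obtain ⟨x₁, hx₁, hx₁v⟩ := Finset.mem_image.mp hm₁mem
      rw [Finset.mem_filter] at hx₁
      rw [← hx₁v]
      exact hx₁.2
    have hm₁pos : 0 < m₁ := lt_trans hm hm₁gt
    have hm₁le : ∀ z : ↥(T2ᶜ), m₁ ≤ qf P z.1.1.1 := by
      intro z
      have hzgt : m < qf P z.1.1.1 := by
        have h1 : ¬ (qf P z.1.1.1 < m) := z.1.2
        have h2 : ¬ (qf P z.1.1.1 = m) := z.2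
        rcases lt_trichotomy (qf P z.1.1.1) m with h | h | h
        · exact absurd h h1
        · exact absurd h h2
        · exact h
      by_cases hle : qf P z.1.1.1 ≤ v₀
      · apply Finset.min'_le
        refine Finset.mem_image.mpr ⟨z.1.1.1, ?_, rfl⟩
        rw [Finset.mem_filter, Set.Finite.mem_toFinset]
        exact ⟨hle, hzgt⟩
      · have hv₀Fb : m₁ ≤ v₀ := by
          apply Finset.min'_le
          refine Finset.mem_image.mpr ⟨y₀.1.1.1, ?_, rfl⟩
          rw [Finset.mem_filter, Set.Finite.mem_toFinset]
          exact ⟨hv₀.ge, hy₀gt⟩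
        linarith [lt_of_not_ge hle]
    set Z : ℝ := ∑' x : {x : Fin n → ℤ // x ≠ 0}, qf P x.1 ^ (-s₀) with hZ
    have hZsum : Summable fun x : {x : Fin n → ℤ // x ≠ 0} => qf P x.1 ^ (-s₀) :=
      summable_qf P hP hs₀ok
    have hZ0 : 0 ≤ Z := tsum_nonneg fun x => Real.rpow_nonneg (qf_nonneg P x.1) _
    -- uniform bound for each t
    have hbound : ∀ t : ℕ,
        |Am| ≤ (m ^ (s₀+1) * (2 * d * Z)) * ((m / m₁) ^ t) := by
      intro t
      set s : ℝ := s₀ + t with hsdef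
      have hsok : (n : ℝ) / 2 < s := by
        have ht0 : (0:ℝ) ≤ (t:ℝ) := Nat.cast_nonneg t
        rw [hsdef]; linarith
      have h1 := master s hsok
      set tail : ℝ := ∑' z : ↥(T2ᶜ), qf P z.1.1.1 ^ (-(s+1)) * h' z.1.1.1 with htail
      have hpow : (0:ℝ) < m ^ (s+1) := Real.rpow_pos_of_pos hm _
      have hAm_eq : Am = m ^ (s+1) * (-tail) := by
        have hinv : m ^ (-(s+1)) = (m ^ (s+1))⁻¹ := Real.rpow_neg hm.le (s+1)
        have h1' : (m ^ (s+1))⁻¹ * Am = -tail := by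
          rw [← hinv]; linarith [h1]
        have h2' : m^(s+1) * ((m^(s+1))⁻¹ * Am) = m^(s+1) * (-tail) := by rw [h1']
        rwa [← mul_assoc, mul_inv_cancel₀ hpow.ne', one_mul] at h2'
      -- summability of the tail family and its majorant
      have hsumf : Summable fun x : {x : Fin n → ℤ // x ≠ 0} =>
          qf P x.1 ^ (-(s+1)) * h' x.1 := summable_h P hP hsok α
      have hsumtail : Summable fun z : ↥(T2ᶜ) => qf P z.1.1.1 ^ (-(s+1)) * h' z.1.1.1 := by
        have h2 := (hsumf.subtype T1ᶜ).subtype (T2ᶜ)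
        exact h2.congr fun z => rfl
      have hsummaj : Summable fun z : ↥(T2ᶜ) =>
          (2 * d * (m₁ ^ t)⁻¹) * qf P z.1.1.1 ^ (-s₀) := by
        have h2 := (hZsum.subtype T1ᶜ).subtype (T2ᶜ)
        exact (h2.congr fun z => rfl).mul_left _
      -- pointwise bound
      have hpt : ∀ z : ↥(T2ᶜ),
          |qf P z.1.1.1 ^ (-(s+1)) * h' z.1.1.1|
            ≤ (2 * d * (m₁ ^ t)⁻¹) * qf P z.1.1.1 ^ (-s₀) := by
        intro z
        set q : ℝ := qf P z.1.1.1 with hq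
        have hzne : (z.1.1.1 : Fin n → ℤ) ≠ 0 := z.1.1.2
        have hq0 : 0 < q := qf_pos P hP hzne
        have hqm₁ : m₁ ≤ q := hm₁le z
        have hh'bound : |h' z.1.1.1| ≤ 2 * q * d := by
          have hcs : (latv P z.1.1.1 ⬝ᵥ α) ^ 2 ≤ q * d := cs_bound P α z.1.1.1
          have hb2 : 0 ≤ q * (d / (n:ℝ)) := by positivity
          have hb3 : q * (d / (n:ℝ)) ≤ q * d := by
            apply mul_le_mul_of_nonneg_left _ hq0.le
            apply div_le_self hd0
            exact_mod_cast hn1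
          rw [hh']
          rw [abs_sub_le_iff]
          constructor
          · nlinarith [sq_nonneg (latv P z.1.1.1 ⬝ᵥ α)]
          · nlinarith [sq_nonneg (latv P z.1.1.1 ⬝ᵥ α)]
        have hqs : q ^ (-(s+1)) * (2 * q * d) = 2 * d * (q ^ (-s)) := by
          rw [show q ^ (-(s+1)) * (2 * q * d) = 2 * d * (q ^ (-(s+1)) * q) by ring,
            rpow_negsucc_mul hq0 s]
        have hqss : q ^ (-s) ≤ (m₁ ^ t)⁻¹ * q ^ (-s₀) := by
          have hqt : q ^ (-(t:ℝ)) = (q ^ t)⁻¹ := by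
            rw [Real.rpow_neg hq0.le, Real.rpow_natCast]
          have hsplit : q ^ (-s) = q ^ (-s₀) * (q ^ t)⁻¹ := by
            rw [hsdef, show -(s₀ + (t:ℝ)) = (-s₀) + (-(t:ℝ)) by ring,
              Real.rpow_add hq0, hqt]
          rw [hsplit]
          rw [mul_comm ((m₁ ^ t)⁻¹) (q ^ (-s₀))]
          apply mul_le_mul_of_nonneg_left _ (Real.rpow_nonneg hq0.le _)
          apply inv_anti₀ (pow_pos hm₁pos t)
          exact pow_le_pow_left₀ hm₁pos.le hqm₁ t
        calc |q ^ (-(s+1)) * h' z.1.1.1| = q ^ (-(s+1)) * |h' z.1.1.1| := by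
              rw [abs_mul, abs_of_nonneg (Real.rpow_nonneg hq0.le _)]
          _ ≤ q ^ (-(s+1)) * (2 * q * d) :=
              mul_le_mul_of_nonneg_left hh'bound (Real.rpow_nonneg hq0.le _)
          _ = 2 * d * (q ^ (-s)) := hqs
          _ ≤ 2 * d * ((m₁ ^ t)⁻¹ * q ^ (-s₀)) := by
              apply mul_le_mul_of_nonneg_left hqss (by positivity)
          _ = (2 * d * (m₁ ^ t)⁻¹) * q ^ (-s₀) := by ring
      -- tail bound
      have htail_bound : |tail| ≤ (2 * d * (m₁ ^ t)⁻¹) * Z := by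
        calc |tail| ≤ ∑' z : ↥(T2ᶜ), |qf P z.1.1.1 ^ (-(s+1)) * h' z.1.1.1| := by
              have h1 := norm_tsum_le_tsum_norm (f := fun z : ↥(T2ᶜ) =>
                qf P z.1.1.1 ^ (-(s+1)) * h' z.1.1.1) hsumtail.abs
              rw [htail]
              exact h1
          _ ≤ ∑' z : ↥(T2ᶜ), (2 * d * (m₁ ^ t)⁻¹) * qf P z.1.1.1 ^ (-s₀) :=
              Summable.tsum_le_tsum hpt hsumtail.abs hsummaj
          _ = (2 * d * (m₁ ^ t)⁻¹) * ∑' z : ↥(T2ᶜ), qf P z.1.1.1 ^ (-s₀) := tsum_mul_left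
          _ ≤ (2 * d * (m₁ ^ t)⁻¹) * Z := by
              apply mul_le_mul_of_nonneg_left _ (by positivity)
              rw [hZ]
              apply Summable.tsum_le_tsum_of_inj (fun z : ↥(T2ᶜ) => z.1.1)
                (fun a b hab => Subtype.ext (Subtype.ext hab))
                (fun c _ => Real.rpow_nonneg (qf_nonneg P c.1) _)
                (fun z => le_refl _)
                ((hZsum.subtype T1ᶜ).subtype (T2ᶜ)|>.congr fun z => rfl)
                hZsum
      -- combine
      have hmpow : m ^ (s+1) = m ^ (s₀+1) * m ^ t := by
        rw [hsdef, show s₀ + (t:ℝ) + 1 = (s₀ + 1) + (t:ℝ) by ring,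
          Real.rpow_add hm, Real.rpow_natCast]
      calc |Am| = m ^ (s+1) * |tail| := by
            rw [hAm_eq, abs_mul, abs_neg, abs_of_pos hpow]
        _ ≤ m ^ (s+1) * ((2 * d * (m₁ ^ t)⁻¹) * Z) :=
            mul_le_mul_of_nonneg_left htail_bound hpow.le
        _ = (m ^ (s₀+1) * (2 * d * Z)) * ((m ^ t) * (m₁ ^ t)⁻¹) := by
            rw [hmpow]; ring
        _ = (m ^ (s₀+1) * (2 * d * Z)) * ((m / m₁) ^ t) := by
            rw [div_pow, div_eq_mul_inv]
    -- take the limit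
    have hρ0 : (0:ℝ) ≤ m / m₁ := by positivity
    have hρ1 : m / m₁ < 1 := by
      rw [div_lt_one hm₁pos]; exact hm₁gt
    have htends : Filter.Tendsto
        (fun t : ℕ => (m ^ (s₀+1) * (2 * d * Z)) * ((m / m₁) ^ t))
        Filter.atTop (nhds 0) := by
      have := (tendsto_pow_atTop_nhds_zero_of_lt_one hρ0 hρ1).const_mul
        (m ^ (s₀+1) * (2 * d * Z))
      simpa using this
    have : |Am| ≤ 0 := ge_of_tendsto' htends hbound
    exact abs_nonpos_iff.mp this
end D2

/-- If the full-rank lattice `L = Pℤⁿ` satisfies the matrix identity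
`∑_{y ∈ L∖{0}} y yᵀ / ‖y‖^{2(s+1)} = (ζ(L,s)/n) · Iₙ` for every real `s > n/2`, then all
nonempty layers of `L` hold a 2-design. -/
theorem allLayers2Design_of_matrix_identity
    {n : ℕ} (P : Matrix (Fin n) (Fin n) ℝ) (hP : IsUnit P.det)
    (hid : ∀ s : ℝ, (n : ℝ) / 2 < s →
      (∑' x : {x : Fin n → ℤ // x ≠ 0},
          ((latv P x.1 ⬝ᵥ latv P x.1) ^ (-(s + 1))) • vecMulVec (latv P x.1) (latv P x.1))
        = (zetaLat P s / (n : ℝ)) • (1 : Matrix (Fin n) (Fin n) ℝ)) :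
    ∀ m : ℝ, 0 < m → (layer P m).Nonempty → ∀ α : Fin n → ℝ,
      ∑ᶠ x ∈ layer P m, (latv P x ⬝ᵥ α) ^ 2
        = m * (Nat.card (layer P m)) / (n : ℝ) * (α ⬝ᵥ α) := by
  intro m hm hne α
  classical
  have hfin := D2.finite_layer P hP m
  have hclaim := D2.claim P hP hid α ({x : Fin n → ℤ | x ≠ 0 ∧ D2.qf P x < m}).ncard m hm le_rfl
  -- rewrite the finsum as a finite sum
  have hfs : ∑ᶠ x ∈ layer P m, (latv P x ⬝ᵥ α) ^ 2
      = ∑ x ∈ hfin.toFinset, (latv P x ⬝ᵥ α) ^ 2 := by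
    exact finsum_mem_eq_finite_toFinset_sum _ hfin
  have hcard : (Nat.card (layer P m) : ℝ) = (hfin.toFinset.card : ℝ) := by
    rw [Nat.card_coe_set_eq, Set.ncard_eq_toFinset_card (layer P m) hfin]
  have hsum2 : ∑ x ∈ hfin.toFinset, D2.qf P x * ((α ⬝ᵥ α) / (n : ℝ))
      = (hfin.toFinset.card : ℝ) * (m * ((α ⬝ᵥ α) / (n : ℝ))) := by
    calc ∑ x ∈ hfin.toFinset, D2.qf P x * ((α ⬝ᵥ α) / (n : ℝ))
        = ∑ _x ∈ hfin.toFinset, m * ((α ⬝ᵥ α) / (n : ℝ)) := by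
          apply Finset.sum_congr rfl
          intro x hx
          have : D2.qf P x = m := hfin.mem_toFinset.mp hx
          rw [this]
      _ = (hfin.toFinset.card : ℝ) * (m * ((α ⬝ᵥ α) / (n : ℝ))) := by
          rw [Finset.sum_const, nsmul_eq_mul]
  have hdiff : ∑ x ∈ hfin.toFinset, (latv P x ⬝ᵥ α) ^ 2
      = ∑ x ∈ hfin.toFinset, D2.qf P x * ((α ⬝ᵥ α) / (n : ℝ)) := by
    have := hclaim
    rw [Finset.sum_sub_distrib] at this
    linarith [this]
  rw [hfs, hdiff, hsum2, hcard]
  ring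
end

section
/- Let L ⊂ ℝ^n be a full-rank lattice all of whose layers hold a 4-design. Then for every real s > n/2 and every symmetric real n×n matrix H, ∑_{y ∈ L∖{0}} (yᵀHy)²/‖y‖^{2(s+2)} = (ζ(L,s)/(n(n+2))) · ((Tr H)² + 2 Tr(H²)). -/
open Matrix

namespace EpsteinAux

variable {n : ℕ}

/-! ### Basic facts about `latv` and positivity -/

section Basic
variable (P : Matrix (Fin n) (Fin n) ℝ)

lemma icast_eq_zero {x : Fin n → ℤ} (h : icast x = 0) : x = 0 := by
  funext i
  have := congrFun h i
  simpa [icast] using this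

lemma icast_recover (hP : IsUnit P.det) (x : Fin n → ℤ) :
    P⁻¹ *ᵥ (latv P x) = icast x := by
  rw [latv, mulVec_mulVec, nonsing_inv_mul P hP, one_mulVec]

lemma latv_ne_zero (hP : IsUnit P.det) {x : Fin n → ℤ} (hx : x ≠ 0) : latv P x ≠ 0 := by
  intro h
  apply hx
  apply icast_eq_zero
  rw [← icast_recover P hP x, h, mulVec_zero]

lemma q_nonneg (x : Fin n → ℤ) : 0 ≤ latv P x ⬝ᵥ latv P x := by
  rw [dotProduct]; exact Finset.sum_nonneg fun i _ => mul_self_nonneg _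

lemma q_pos (hP : IsUnit P.det) {x : Fin n → ℤ} (hx : x ≠ 0) : 0 < latv P x ⬝ᵥ latv P x := by
  rcases lt_or_eq_of_le (q_nonneg P x) with h | h
  · exact h
  · exact absurd (dotProduct_self_eq_zero.mp h.symm) (latv_ne_zero P hP hx)

/-- Cauchy–Schwarz style bound: `(A *ᵥ y) ⬝ᵥ (A *ᵥ y) ≤ (∑∑ A²) * (y ⬝ᵥ y)`. -/
lemma mulVec_dot_le (A : Matrix (Fin n) (Fin n) ℝ) (y : Fin n → ℝ) :
    (A *ᵥ y) ⬝ᵥ (A *ᵥ y) ≤ (∑ i, ∑ j, (A i j)^2) * (y ⬝ᵥ y) := by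
  rw [dotProduct, Finset.sum_mul]
  apply Finset.sum_le_sum
  intro i _
  have h1 : (A *ᵥ y) i * (A *ᵥ y) i = (∑ j, A i j * y j)^2 := by
    simp [mulVec, dotProduct, sq]
  rw [h1]
  have h2 := Finset.sum_mul_sq_le_sq_mul_sq Finset.univ (fun j => A i j) y
  calc (∑ j, A i j * y j)^2 ≤ (∑ j, (A i j)^2) * (∑ j, (y j)^2) := h2
    _ = (∑ j, (A i j)^2) * (y ⬝ᵥ y) := by
        rw [dotProduct]; congr 1; exact Finset.sum_congr rfl fun j _ => (sq (y j)).symm ▸ rfl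

/-- A positive constant with `x ⬝ x ≤ D * (Px ⬝ Px)`. -/
noncomputable def D : ℝ := (∑ i, ∑ j, (P⁻¹ i j)^2) + 1

lemma D_pos : 0 < D P := by
  have : 0 ≤ ∑ i, ∑ j, (P⁻¹ i j)^2 :=
    Finset.sum_nonneg fun i _ => Finset.sum_nonneg fun j _ => sq_nonneg _
  unfold D; linarith

lemma icast_dot_le (hP : IsUnit P.det) (x : Fin n → ℤ) :
    icast x ⬝ᵥ icast x ≤ D P * (latv P x ⬝ᵥ latv P x) := by
  have h1 : icast x ⬝ᵥ icast x = (P⁻¹ *ᵥ latv P x) ⬝ᵥ (P⁻¹ *ᵥ latv P x) := by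
    rw [icast_recover P hP]
  rw [h1]
  calc (P⁻¹ *ᵥ latv P x) ⬝ᵥ (P⁻¹ *ᵥ latv P x)
      ≤ (∑ i, ∑ j, (P⁻¹ i j)^2) * (latv P x ⬝ᵥ latv P x) := mulVec_dot_le _ _
    _ ≤ D P * (latv P x ⬝ᵥ latv P x) := by
        unfold D
        nlinarith [q_nonneg P x]

end Basic

/-! ### The sup-norm on integer vectors and counting -/

def Nm (x : Fin n → ℤ) : ℕ := Finset.univ.sup fun i => (x i).natAbs

lemma Nm_zero : Nm (0 : Fin n → ℤ) = 0 := by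
  apply Nat.le_zero.mp
  apply Finset.sup_le
  intro i _
  simp

lemma Nm_eq_zero {x : Fin n → ℤ} (h : Nm x = 0) : x = 0 := by
  funext i
  have : (x i).natAbs ≤ Nm x := Finset.le_sup (f := fun j => (x j).natAbs) (Finset.mem_univ i)
  rw [h] at this
  simpa using Int.natAbs_eq_zero.mp (by omega)

noncomputable def Bf (k : ℕ) : Finset (Fin n → ℤ) := Fintype.piFinset fun _ : Fin n => Finset.Icc (-(k:ℤ)) k

lemma mem_Bf {k : ℕ} {x : Fin n → ℤ} : x ∈ (Bf k : Finset (Fin n → ℤ)) ↔ Nm x ≤ k := by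
  simp only [Bf, Fintype.mem_piFinset, Finset.mem_Icc, Nm, Finset.sup_le_iff, Finset.mem_univ,
    true_implies]
  constructor
  · intro h i
    have := h i
    omega
  · intro h i
    have := h i
    omega

lemma card_Bf (k : ℕ) : (Bf (n := n) k).card = (2*k+1)^n := by
  simp only [Bf, Fintype.card_piFinset, Int.card_Icc]
  have : ((k:ℤ) + 1 - -(k:ℤ)).toNat = 2*k+1 := by omega
  rw [this, Finset.prod_const, Finset.card_univ, Fintype.card_fin]

lemma Bf_mono {j k : ℕ} (h : j ≤ k) : (Bf (n := n) j) ⊆ Bf k := by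
  intro x hx
  rw [mem_Bf] at hx ⊢
  omega

lemma card_sdiff_le (hn : 0 < n) (k : ℕ) (hk : 1 ≤ k) :
    (((Bf (n := n) k) \ (Bf (k-1))).card : ℝ) ≤ (2*n*3^(n-1) : ℝ) * (k:ℝ)^(n-1) := by
  have hsub : (Bf (n := n) (k-1)) ⊆ Bf k := Bf_mono (by omega)
  rw [Finset.card_sdiff_of_subset hsub, card_Bf, card_Bf]
  have hle : (2*(k-1)+1)^n ≤ (2*k+1)^n := Nat.pow_le_pow_left (by omega) n
  rw [Nat.cast_sub hle]
  push_cast [Nat.cast_sub hk]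
  set a : ℝ := 2*(k:ℝ)+1 with ha
  have hb : (2*((k:ℝ)-1)+1) = a - 2 := by ring
  rw [hb]
  have hgeom := geom_sum₂_mul a (a-2) n
  have h1 : a^n - (a-2)^n = (∑ i ∈ Finset.range n, a^i * (a-2)^(n-1-i)) * 2 := by
    rw [← hgeom]; ring_nf
  rw [h1]
  have ha1 : (1:ℝ) ≤ a := by
    have : (1:ℝ) ≤ (k:ℝ) := by exact_mod_cast hk
    simp only [ha]; linarith
  have hterm : ∀ i ∈ Finset.range n, a^i * (a-2)^(n-1-i) ≤ a^(n-1) := by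
    intro i hi
    have hi' : i < n := Finset.mem_range.mp hi
    have h2 : (a-2)^(n-1-i) ≤ a^(n-1-i) := by
      apply pow_le_pow_left₀
      · have : (1:ℝ) ≤ (k:ℝ) := by exact_mod_cast hk
        simp only [ha]; linarith
      · linarith
    calc a^i * (a-2)^(n-1-i) ≤ a^i * a^(n-1-i) := by
          apply mul_le_mul_of_nonneg_left h2 (by positivity)
      _ = a^(n-1) := by rw [← pow_add]; congr 1; omega
  have hsum : (∑ i ∈ Finset.range n, a^i * (a-2)^(n-1-i)) ≤ n * a^(n-1) := by
    calc (∑ i ∈ Finset.range n, a^i * (a-2)^(n-1-i)) ≤ ∑ _i ∈ Finset.range n, a^(n-1) :=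
          Finset.sum_le_sum hterm
      _ = n * a^(n-1) := by rw [Finset.sum_const, Finset.card_range, nsmul_eq_mul]
  have hak : a^(n-1) ≤ 3^(n-1) * (k:ℝ)^(n-1) := by
    rw [← mul_pow]
    apply pow_le_pow_left₀ (by positivity)
    have : (1:ℝ) ≤ (k:ℝ) := by exact_mod_cast hk
    simp only [ha]; linarith
  have h3 : (0:ℝ) ≤ a^(n-1) := by positivity
  nlinarith [hsum, hak, h3]

lemma fibfin (k : ℕ) : {x : Fin n → ℤ | Nm x = k}.Finite :=
  Set.Finite.subset (Bf k).finite_toSet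
    (fun x hx => by rw [Finset.mem_coe, mem_Bf]; exact le_of_eq hx)

lemma cardb (hn : 0 < n) (k : ℕ) (hk : 1 ≤ k) :
    (Nat.card {x : Fin n → ℤ | Nm x = k} : ℝ) ≤ (2*n*3^(n-1) : ℝ) * (k:ℝ)^(n-1) := by
  refine le_trans ?_ (card_sdiff_le hn k hk)
  have hsub : {x : Fin n → ℤ | Nm x = k} ⊆ (((Bf (n := n) k) \ (Bf (k-1)) : Finset (Fin n → ℤ)) : Set (Fin n → ℤ)) := by
    intro x hx
    simp only [Set.mem_setOf_eq] at hx
    simp only [Finset.coe_sdiff, Set.mem_diff, Finset.mem_coe, mem_Bf]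
    omega
  have h1 := Set.ncard_le_ncard hsub ((Bf k \ Bf (k-1)) : Finset (Fin n → ℤ)).finite_toSet
  rw [Nat.card_coe_set_eq]
  rw [Set.ncard_coe_finset] at h1
  exact_mod_cast h1

lemma summable_Nm_rpow (hn : 0 < n) {t : ℝ} (ht : (n:ℝ) < t) :
    Summable fun x : Fin n → ℤ => (Nm x : ℝ) ^ (-t) := by
  have htpos : 0 < t := lt_of_le_of_lt (by exact_mod_cast Nat.zero_le n) ht
  have hnn : (0:(Fin n → ℤ) → ℝ) ≤ fun x => (Nm x : ℝ) ^ (-t) :=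
    fun x => Real.rpow_nonneg (Nat.cast_nonneg _) _
  have hs : ∀ x : Fin n → ℤ, ∃! k : ℕ, x ∈ {x : Fin n → ℤ | Nm x = k} :=
    fun x => ⟨Nm x, rfl, fun j h => h.symm⟩
  rw [summable_partition hnn hs]
  constructor
  · intro k
    have := (fibfin (n := n) k).to_subtype
    exact .of_finite
  · have hconst : ∀ k : ℕ, (∑' i : {x : Fin n → ℤ | Nm x = k}, (Nm i.1 : ℝ) ^ (-t))
        = (Nat.card {x : Fin n → ℤ | Nm x = k} : ℝ) * (k:ℝ) ^ (-t) := by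
      intro k
      have : ∀ i : {x : Fin n → ℤ | Nm x = k}, ((Nm i.1 : ℝ)) ^ (-t) = (k:ℝ) ^ (-t) := by
        intro i; rw [i.2]
      rw [tsum_congr this, tsum_const, nsmul_eq_mul]
    set C : ℝ := (2*n*3^(n-1) : ℝ) with hC
    have hCpos : 0 < C := by positivity
    refine Summable.of_nonneg_of_le (f := fun k : ℕ => C * (k:ℝ) ^ (((n:ℝ) - 1) - t))
      (fun k => by rw [hconst k]; positivity) ?_ ?_
    · intro k
      rw [hconst k]
      rcases Nat.eq_zero_or_pos k with rfl | hk
      · have h0 : ((0:ℕ):ℝ) ^ (-t) = 0 := by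
          rw [Nat.cast_zero, Real.zero_rpow (by linarith)]
        rw [h0, mul_zero]
        have h1 : (0:ℝ) ≤ C * ((0:ℕ):ℝ) ^ ((n:ℝ) - 1 - t) := by positivity
        exact h1
      · show _ ≤ C * (k:ℝ) ^ ((n:ℝ) - 1 - t)
        have hk1 : (1:ℝ) ≤ (k:ℝ) := by exact_mod_cast hk
        have hsplit : (k:ℝ) ^ (((n:ℝ) - 1) - t) = (k:ℝ)^(n-1) * (k:ℝ)^(-t) := by
          rw [sub_eq_add_neg, Real.rpow_add (by linarith), ← Real.rpow_natCast (k:ℝ) (n-1)]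
          congr 2
          rw [Nat.cast_sub hn, Nat.cast_one]
        rw [hsplit, ← mul_assoc]
        apply mul_le_mul_of_nonneg_right _ (Real.rpow_nonneg (by linarith) _)
        exact cardb hn k hk
    · exact ((Real.summable_nat_rpow.mpr (by linarith)).mul_left C)

/-! ### Comparison with the quadratic form -/

section Compare
variable (P : Matrix (Fin n) (Fin n) ℝ)

lemma Nm_sq_le_dot (hn : 0 < n) (x : Fin n → ℤ) :
    ((Nm x : ℝ))^2 ≤ icast x ⬝ᵥ icast x := by
  have : Nonempty (Fin n) := ⟨⟨0, hn⟩⟩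
  obtain ⟨i, -, hi⟩ := Finset.exists_mem_eq_sup (Finset.univ : Finset (Fin n))
    Finset.univ_nonempty (fun j => (x j).natAbs)
  have h1 : ((Nm x : ℝ))^2 = icast x i * icast x i := by
    rw [Nm, hi]
    have : ((x i).natAbs : ℝ) = |icast x i| := by
      simp [icast, Nat.cast_natAbs]
    rw [this, sq, ← abs_mul, abs_mul_self]
  rw [h1, dotProduct]
  exact Finset.single_le_sum (f := fun j => icast x j * icast x j)
    (fun j _ => mul_self_nonneg _) (Finset.mem_univ i)

lemma layer_finite (hP : IsUnit P.det) (hn : 0 < n) (m : ℝ) : (layer P m).Finite := by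
  set B : ℕ := (⌈D P * m⌉).toNat with hB
  apply Set.Finite.subset (Bf (n := n) B).finite_toSet
  intro x hx
  rw [Finset.mem_coe, mem_Bf]
  have hdot : icast x ⬝ᵥ icast x ≤ D P * m := by
    have h1 := icast_dot_le P hP x
    rwa [hx] at h1
  have h2 : ((Nm x : ℝ))^2 ≤ (B : ℝ) := by
    calc ((Nm x : ℝ))^2 ≤ icast x ⬝ᵥ icast x := Nm_sq_le_dot hn x
      _ ≤ D P * m := hdot
      _ ≤ (⌈D P * m⌉ : ℝ) := Int.le_ceil _
      _ ≤ (B : ℝ) := by rw [hB]; exact_mod_cast Int.self_le_toNat _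
  have h3 : (Nm x)^2 ≤ B := by exact_mod_cast h2
  calc Nm x ≤ (Nm x)^2 := Nat.le_self_pow two_ne_zero _
    _ ≤ B := h3

lemma q_lower (hP : IsUnit P.det) (hn : 0 < n) (x : Fin n → ℤ) :
    ((Nm x : ℝ))^2 / D P ≤ latv P x ⬝ᵥ latv P x := by
  rw [div_le_iff₀ (D_pos P)]
  calc ((Nm x : ℝ))^2 ≤ icast x ⬝ᵥ icast x := Nm_sq_le_dot hn x
    _ ≤ D P * (latv P x ⬝ᵥ latv P x) := icast_dot_le P hP x
    _ = (latv P x ⬝ᵥ latv P x) * D P := mul_comm _ _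

lemma summable_q_rpow (hP : IsUnit P.det) (hn : 0 < n) {s : ℝ} (hs : (n:ℝ)/2 < s) :
    Summable fun x : {x : Fin n → ℤ // x ≠ 0} => (latv P x.1 ⬝ᵥ latv P x.1) ^ (-s) := by
  have hspos : 0 < s := lt_of_le_of_lt (div_nonneg (Nat.cast_nonneg n) (by norm_num)) hs
  have h2s : (n:ℝ) < 2*s := by linarith
  have base : Summable fun x : {x : Fin n → ℤ // x ≠ 0} => (Nm x.1 : ℝ) ^ (-(2*s)) :=
    (summable_Nm_rpow hn h2s).subtype _
  refine Summable.of_nonneg_of_le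
    (fun x => Real.rpow_nonneg (q_nonneg P x.1) _) ?_ (base.mul_left ((D P) ^ s))
  intro x
  have hNm1 : 1 ≤ Nm x.1 := by
    rcases Nat.eq_zero_or_pos (Nm x.1) with h | h
    · exact absurd (Nm_eq_zero h) x.2
    · exact h
  have hNmpos : (0:ℝ) < (Nm x.1 : ℝ) := by exact_mod_cast hNm1
  have hb : ((Nm x.1 : ℝ))^2 / D P ≤ latv P x.1 ⬝ᵥ latv P x.1 := q_lower P hP hn x.1
  have hbpos : 0 < ((Nm x.1 : ℝ))^2 / D P := div_pos (pow_pos hNmpos 2) (D_pos P)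
  have h1 : (latv P x.1 ⬝ᵥ latv P x.1) ^ (-s) ≤ (((Nm x.1 : ℝ))^2 / D P) ^ (-s) :=
    Real.rpow_le_rpow_of_nonpos hbpos hb (by linarith)
  refine h1.trans (le_of_eq ?_)
  rw [Real.div_rpow (by positivity) (le_of_lt (D_pos P))]
  rw [← Real.rpow_natCast ((Nm x.1 : ℝ)) 2, ← Real.rpow_mul (le_of_lt hNmpos)]
  rw [Real.rpow_neg (le_of_lt (D_pos P)), div_eq_mul_inv, inv_inv]
  push_cast
  rw [mul_comm]
  congr 2
  ring

end Compare

/-! ### The design algebra -/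

lemma quad_of_design (T : Finset (Fin n → ℤ)) (v : (Fin n → ℤ) → (Fin n → ℝ)) (K : ℝ)
    (hQ : ∀ α : Fin n → ℝ, ∑ x ∈ T, (v x ⬝ᵥ α)^4 = 3*K*(α ⬝ᵥ α)^2)
    (a b c d : Fin n → ℝ) :
    ∑ x ∈ T, (v x ⬝ᵥ a) * (v x ⬝ᵥ b) * (v x ⬝ᵥ c) * (v x ⬝ᵥ d)
      = K * ((a ⬝ᵥ b) * (c ⬝ᵥ d) + (a ⬝ᵥ c) * (b ⬝ᵥ d) + (a ⬝ᵥ d) * (b ⬝ᵥ c)) := by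
  have key : 192 * ∑ x ∈ T, (v x ⬝ᵥ a) * (v x ⬝ᵥ b) * (v x ⬝ᵥ c) * (v x ⬝ᵥ d)
      = (∑ x ∈ T, (v x ⬝ᵥ (a+b+c+d))^4) - (∑ x ∈ T, (v x ⬝ᵥ (a+b+c-d))^4)
        - (∑ x ∈ T, (v x ⬝ᵥ (a+b-c+d))^4) + (∑ x ∈ T, (v x ⬝ᵥ (a+b-c-d))^4)
        - (∑ x ∈ T, (v x ⬝ᵥ (a-b+c+d))^4) + (∑ x ∈ T, (v x ⬝ᵥ (a-b+c-d))^4)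
        + (∑ x ∈ T, (v x ⬝ᵥ (a-b-c+d))^4) - (∑ x ∈ T, (v x ⬝ᵥ (a-b-c-d))^4) := by
    simp only [← Finset.sum_sub_distrib, ← Finset.sum_add_distrib, Finset.mul_sum]
    apply Finset.sum_congr rfl
    intro x _
    simp only [dotProduct_add, dotProduct_sub]
    ring
  rw [hQ (a+b+c+d), hQ (a+b+c-d), hQ (a+b-c+d), hQ (a+b-c-d), hQ (a-b+c+d), hQ (a-b+c-d),
    hQ (a-b-c+d), hQ (a-b-c-d)] at key
  simp only [dotProduct_add, dotProduct_sub, add_dotProduct, sub_dotProduct] at key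
  rw [dotProduct_comm b a, dotProduct_comm c a, dotProduct_comm d a, dotProduct_comm c b,
    dotProduct_comm d b, dotProduct_comm d c] at key
  linear_combination key / 192

lemma design_sum (T : Finset (Fin n → ℤ)) (v : (Fin n → ℤ) → (Fin n → ℝ)) (K : ℝ)
    (hQ : ∀ α : Fin n → ℝ, ∑ x ∈ T, (v x ⬝ᵥ α)^4 = 3*K*(α ⬝ᵥ α)^2)
    (H : Matrix (Fin n) (Fin n) ℝ) (hH : H.IsSymm) :
    ∑ x ∈ T, (v x ⬝ᵥ H.mulVec (v x))^2 = K * (H.trace^2 + 2*(H*H).trace) := by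
  have hrow : ∀ x, v x ⬝ᵥ H.mulVec (v x) = ∑ a, (v x ⬝ᵥ Pi.single a 1) * (v x ⬝ᵥ H a) := by
    intro x
    have h1 : ∀ a, v x ⬝ᵥ Pi.single a 1 = v x a := fun a => by rw [dotProduct_single, mul_one]
    simp only [h1]
    simp only [dotProduct, mulVec]
    apply Finset.sum_congr rfl
    intro i _
    rw [Finset.mul_sum, Finset.mul_sum]
    apply Finset.sum_congr rfl
    intro j _
    ring
  have e1 : ∀ x, (v x ⬝ᵥ H.mulVec (v x))^2
      = ∑ a, ∑ c, (v x ⬝ᵥ Pi.single a 1) * (v x ⬝ᵥ H a)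
          * (v x ⬝ᵥ Pi.single c 1) * (v x ⬝ᵥ H c) := by
    intro x
    rw [sq, hrow x, Finset.sum_mul_sum]
    apply Finset.sum_congr rfl; intro a _
    apply Finset.sum_congr rfl; intro c _
    ring
  calc ∑ x ∈ T, (v x ⬝ᵥ H.mulVec (v x))^2
      = ∑ x ∈ T, ∑ a, ∑ c, (v x ⬝ᵥ Pi.single a 1) * (v x ⬝ᵥ H a)
          * (v x ⬝ᵥ Pi.single c 1) * (v x ⬝ᵥ H c) := Finset.sum_congr rfl fun x _ => e1 x
    _ = ∑ a, ∑ c, ∑ x ∈ T, (v x ⬝ᵥ Pi.single a 1) * (v x ⬝ᵥ H a)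
          * (v x ⬝ᵥ Pi.single c 1) * (v x ⬝ᵥ H c) := by
        rw [Finset.sum_comm]
        exact Finset.sum_congr rfl fun a _ => Finset.sum_comm
    _ = ∑ a, ∑ c, K * ((Pi.single a 1 ⬝ᵥ H a) * (Pi.single c 1 ⬝ᵥ H c)
          + (Pi.single a 1 ⬝ᵥ Pi.single c 1) * (H a ⬝ᵥ H c)
          + (Pi.single a 1 ⬝ᵥ H c) * (H a ⬝ᵥ Pi.single c 1)) := by
        apply Finset.sum_congr rfl; intro a _
        apply Finset.sum_congr rfl; intro c _
        exact quad_of_design T v K hQ _ _ _ _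
    _ = K * (H.trace^2 + 2*(H*H).trace) := by
        simp only [single_dotProduct, dotProduct_single, one_mul, mul_one, Pi.single_apply]
        have h1 : ∀ a : Fin n, ∑ c : Fin n,
            (if c = a then (1:ℝ) else 0) * (H a ⬝ᵥ H c) = H a ⬝ᵥ H a := by
          intro a
          rw [Finset.sum_eq_single a]
          · simp
          · intro b _ hb; simp [hb]
          · intro h; exact absurd (Finset.mem_univ a) h
        have htr : H.trace = ∑ a : Fin n, H a a := by simp [Matrix.trace, Matrix.diag]
        have htr2 : (H*H).trace = ∑ a : Fin n, ∑ c : Fin n, H a c * H c a := by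
          simp [Matrix.trace, Matrix.diag, Matrix.mul_apply]
        have hdot : ∀ a : Fin n, H a ⬝ᵥ H a = ∑ c : Fin n, H a c * H c a := by
          intro a
          rw [dotProduct]
          exact Finset.sum_congr rfl fun c _ => by rw [hH.apply c a]
        have hsplit : ∀ a : Fin n, ∑ c : Fin n, K * (H a a * H c c
              + (if c = a then (1:ℝ) else 0) * (H a ⬝ᵥ H c) + H c a * H a c)
            = K * (H a a * (∑ c, H c c)) + K * (H a ⬝ᵥ H a) + K * (∑ c, H c a * H a c) := by
          intro a
          rw [← h1 a]
          simp only [mul_add, Finset.sum_add_distrib, ← Finset.mul_sum]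
        rw [Finset.sum_congr rfl fun a _ => hsplit a]
        simp only [Finset.sum_add_distrib, ← Finset.mul_sum]
        rw [htr, htr2, ← Finset.sum_mul]
        have hswap : ∑ a : Fin n, ∑ c : Fin n, H c a * H a c
            = ∑ a : Fin n, ∑ c : Fin n, H a c * H c a := by
          rw [Finset.sum_comm]
        rw [hswap]
        have hHH : ∑ a : Fin n, (H a ⬝ᵥ H a) = ∑ a : Fin n, ∑ c : Fin n, H a c * H c a :=
          Finset.sum_congr rfl fun a _ => hdot a
        rw [hHH]
        ring

lemma decomp_general {ι : Type*} (Q : ι → ℝ) (F : ι → ℝ) (hF : Summable F) :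
    ∑' x, F x = ∑' m : ℝ, ∑' x : {x : ι | Q x = m}, F x := by
  have huniq : ∀ x : ι, ∃! m : ℝ, x ∈ {x : ι | Q x = m} :=
    fun x => ⟨Q x, rfl, fun m h => h.symm⟩
  have hFe : Summable (fun p : (Σ m : ℝ, {x : ι | Q x = m}) =>
      F ((Set.sigmaEquiv _ huniq) p)) :=
    (Equiv.summable_iff (Set.sigmaEquiv _ huniq)).mpr hF
  rw [← Equiv.tsum_eq (Set.sigmaEquiv _ huniq) F]
  rw [Summable.tsum_sigma' (fun m => hFe.sigma_factor m) hFe]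
  rfl

lemma fiber_eval (P : Matrix (Fin n) (Fin n) ℝ) (hP : IsUnit P.det) (hn : 0 < n)
    (hdesign : ∀ m : ℝ, 0 < m → (layer P m).Nonempty → ∀ α : Fin n → ℝ,
      ∑ᶠ x ∈ layer P m, (latv P x ⬝ᵥ α) ^ 4
        = 3 * m ^ 2 * (Nat.card (layer P m)) / ((n : ℝ) * ((n : ℝ) + 2)) * (α ⬝ᵥ α) ^ 2)
    (s : ℝ) (H : Matrix (Fin n) (Fin n) ℝ) (hH : H.IsSymm) (m : ℝ) :
    (∑' x : {x : {x : Fin n → ℤ // x ≠ 0} | latv P x.1 ⬝ᵥ latv P x.1 = m},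
        (latv P x.1.1 ⬝ᵥ H.mulVec (latv P x.1.1)) ^ 2
          * (latv P x.1.1 ⬝ᵥ latv P x.1.1) ^ (-(s + 2)))
      = (H.trace ^ 2 + 2 * (H * H).trace) / ((n : ℝ) * ((n : ℝ) + 2)) *
        ∑' x : {x : {x : Fin n → ℤ // x ≠ 0} | latv P x.1 ⬝ᵥ latv P x.1 = m},
          (latv P x.1.1 ⬝ᵥ latv P x.1.1) ^ (-s) := by
  classical
  rcases le_or_gt m 0 with hm | hm
  · haveI : IsEmpty ({x : {x : Fin n → ℤ // x ≠ 0} | latv P x.1 ⬝ᵥ latv P x.1 = m}) := by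
      constructor
      rintro ⟨x, hx⟩
      have := q_pos P hP x.2
      rw [hx] at this
      linarith
    rw [tsum_empty, tsum_empty, mul_zero]
  rcases Set.eq_empty_or_nonempty (layer P m) with hly | hly
  · haveI : IsEmpty ({x : {x : Fin n → ℤ // x ≠ 0} | latv P x.1 ⬝ᵥ latv P x.1 = m}) := by
      constructor
      rintro ⟨x, hx⟩
      exact Set.eq_empty_iff_forall_notMem.mp hly x.1 hx
    rw [tsum_empty, tsum_empty, mul_zero]
  have hfin : (layer P m).Finite := layer_finite P hP hn m
  set T : Finset (Fin n → ℤ) := hfin.toFinset with hT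
  set K : ℝ := m^2 * (Nat.card (layer P m)) / ((n : ℝ) * ((n : ℝ) + 2)) with hK
  have hQ : ∀ α : Fin n → ℝ,
      ∑ x ∈ T, (latv P x ⬝ᵥ α)^4 = 3*K*(α ⬝ᵥ α)^2 := by
    intro α
    have h0 := hdesign m hm hly α
    rw [← Set.Finite.coe_toFinset hfin, finsum_mem_coe_finset,
      Set.Finite.coe_toFinset hfin] at h0
    rw [h0, hK]
    ring
  have hzero_notin : (0 : Fin n → ℤ) ∈ layer P m → False := by
    intro h0
    have h1 : latv P 0 ⬝ᵥ latv P 0 = m := h0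
    rw [latv] at h1
    rw [show icast (0 : Fin n → ℤ) = (0 : Fin n → ℝ) by funext i; simp [icast]] at h1
    rw [mulVec_zero, zero_dotProduct] at h1
    linarith
  have hmem : ∀ x : {x : Fin n → ℤ // x ≠ 0},
      x ∈ {x : {x : Fin n → ℤ // x ≠ 0} | latv P x.1 ⬝ᵥ latv P x.1 = m} ↔ x.1 ∈ T := by
    intro x
    rw [hT, Set.Finite.mem_toFinset]
    exact Iff.rfl
  let E : {x : {x : Fin n → ℤ // x ≠ 0} | latv P x.1 ⬝ᵥ latv P x.1 = m} ≃ {z // z ∈ T} :=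
    { toFun := fun x => ⟨x.1.1, (hmem x.1).mp x.2⟩
      invFun := fun z => ⟨⟨z.1, fun h0 => hzero_notin (by
          rw [← h0]; exact (hfin.mem_toFinset).mp z.2)⟩,
        (hmem _).mpr z.2⟩
      left_inv := fun x => by ext; rfl
      right_inv := fun z => by ext; rfl }
  have hfsum : ∀ G : (Fin n → ℤ) → ℝ,
      (∑' x : {x : {x : Fin n → ℤ // x ≠ 0} | latv P x.1 ⬝ᵥ latv P x.1 = m}, G x.1.1)
        = ∑ z ∈ T, G z := by
    intro G
    rw [← Equiv.tsum_eq E.symm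
      (fun x : {x : {x : Fin n → ℤ // x ≠ 0} | latv P x.1 ⬝ᵥ latv P x.1 = m} => G x.1.1)]
    rw [← Finset.tsum_subtype T G]
    apply tsum_congr
    intro z
    rfl
  have hA : (∑' x : {x : {x : Fin n → ℤ // x ≠ 0} | latv P x.1 ⬝ᵥ latv P x.1 = m},
        (latv P x.1.1 ⬝ᵥ H.mulVec (latv P x.1.1)) ^ 2
          * (latv P x.1.1 ⬝ᵥ latv P x.1.1) ^ (-(s + 2)))
      = ∑ z ∈ T, (latv P z ⬝ᵥ H.mulVec (latv P z))^2 * m ^ (-(s+2)) := by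
    rw [hfsum (fun z => (latv P z ⬝ᵥ H.mulVec (latv P z))^2
      * (latv P z ⬝ᵥ latv P z) ^ (-(s+2)))]
    apply Finset.sum_congr rfl
    intro z hz
    rw [show latv P z ⬝ᵥ latv P z = m from (hfin.mem_toFinset).mp hz]
  have hB : (∑' x : {x : {x : Fin n → ℤ // x ≠ 0} | latv P x.1 ⬝ᵥ latv P x.1 = m},
        (latv P x.1.1 ⬝ᵥ latv P x.1.1) ^ (-s)) = (T.card : ℝ) * m ^ (-s) := by
    rw [hfsum (fun z => (latv P z ⬝ᵥ latv P z) ^ (-s))]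
    have h1 : ∀ z ∈ T, (latv P z ⬝ᵥ latv P z) ^ (-s) = m ^ (-s) := by
      intro z hz
      rw [(hfin.mem_toFinset).mp hz]
    rw [Finset.sum_congr rfl h1, Finset.sum_const, nsmul_eq_mul]
  have hcard : (Nat.card (layer P m) : ℝ) = (T.card : ℝ) := by
    rw [Nat.card_coe_set_eq, Set.ncard_eq_toFinset_card _ hfin]
  have hdes := design_sum T (latv P) K hQ H hH
  have hpow : m ^ (-(s+2)) * m^2 = m ^ (-s) := by
    rw [← Real.rpow_natCast m 2, ← Real.rpow_add hm]
    norm_num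
  rw [hA, hB, ← Finset.sum_mul, hdes, hK, hcard, ← hpow]
  ring

end EpsteinAux

open EpsteinAux

/-- If all (nonempty) layers of the full-rank lattice `L = Pℤⁿ` hold a
4-design, then for every real `s > n/2` and every symmetric `H`,
`∑_{y ∈ L∖{0}} (yᵀHy)²/‖y‖^{2(s+2)} = (ζ(L,s)/(n(n+2))) ((Tr H)² + 2 Tr(H²))`. -/
theorem quartic_identity_of_allLayers4Design
    {n : ℕ} (P : Matrix (Fin n) (Fin n) ℝ) (hP : IsUnit P.det)
    (hdesign : ∀ m : ℝ, 0 < m → (layer P m).Nonempty → ∀ α : Fin n → ℝ,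
      ∑ᶠ x ∈ layer P m, (latv P x ⬝ᵥ α) ^ 4
        = 3 * m ^ 2 * (Nat.card (layer P m)) / ((n : ℝ) * ((n : ℝ) + 2)) * (α ⬝ᵥ α) ^ 2) :
    ∀ s : ℝ, (n : ℝ) / 2 < s → ∀ H : Matrix (Fin n) (Fin n) ℝ, H.IsSymm →
      (∑' x : {x : Fin n → ℤ // x ≠ 0},
          (latv P x.1 ⬝ᵥ H.mulVec (latv P x.1)) ^ 2 * (latv P x.1 ⬝ᵥ latv P x.1) ^ (-(s + 2)))
        = zetaLat P s / ((n : ℝ) * ((n : ℝ) + 2)) * (H.trace ^ 2 + 2 * (H * H).trace) := by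
  intro s hs H hH
  rcases Nat.eq_zero_or_pos n with hn | hn
  · subst hn
    haveI : IsEmpty {x : Fin 0 → ℤ // x ≠ 0} :=
      ⟨fun x => x.2 (funext fun i => Fin.elim0 i)⟩
    rw [tsum_empty, zetaLat, tsum_empty, zero_div, zero_mul]
  · have hsumg : Summable (fun x : {x : Fin n → ℤ // x ≠ 0} =>
        (latv P x.1 ⬝ᵥ latv P x.1) ^ (-s)) := summable_q_rpow P hP hn hs
    have hsumf : Summable (fun x : {x : Fin n → ℤ // x ≠ 0} =>
        (latv P x.1 ⬝ᵥ H.mulVec (latv P x.1)) ^ 2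
          * (latv P x.1 ⬝ᵥ latv P x.1) ^ (-(s + 2))) := by
      set CH : ℝ := ∑ i, ∑ j, (H i j)^2 with hCH
      have hCH0 : 0 ≤ CH := Finset.sum_nonneg fun i _ =>
        Finset.sum_nonneg fun j _ => sq_nonneg _
      refine Summable.of_nonneg_of_le
        (fun x => mul_nonneg (sq_nonneg _) (Real.rpow_nonneg (q_nonneg P x.1) _)) ?_
        ((summable_q_rpow P hP hn hs).mul_left CH)
      intro x
      set y : Fin n → ℝ := latv P x.1 with hy
      have hq : 0 < y ⬝ᵥ y := q_pos P hP x.2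
      have hcs : (y ⬝ᵥ H.mulVec y)^2 ≤ (y ⬝ᵥ y) * ((H *ᵥ y) ⬝ᵥ (H *ᵥ y)) := by
        have h0 := Finset.sum_mul_sq_le_sq_mul_sq Finset.univ y (H *ᵥ y)
        calc (y ⬝ᵥ H.mulVec y)^2 = (∑ i, y i * (H *ᵥ y) i)^2 := by rw [dotProduct]
          _ ≤ (∑ i, (y i)^2) * (∑ i, ((H *ᵥ y) i)^2) := h0
          _ = (y ⬝ᵥ y) * ((H *ᵥ y) ⬝ᵥ (H *ᵥ y)) := by
              rw [dotProduct, dotProduct]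
              congr 1
              · exact Finset.sum_congr rfl fun i _ => (sq (y i)).symm ▸ rfl
              · exact Finset.sum_congr rfl fun i _ => (sq ((H *ᵥ y) i)).symm ▸ rfl
      have hcs2 : ((H *ᵥ y) ⬝ᵥ (H *ᵥ y)) ≤ CH * (y ⬝ᵥ y) := mulVec_dot_le H y
      have hnum : (y ⬝ᵥ H.mulVec y)^2 ≤ CH * (y ⬝ᵥ y)^2 := by nlinarith [hq]
      have hpow : (y ⬝ᵥ y)^2 * (y ⬝ᵥ y) ^ (-(s+2)) = (y ⬝ᵥ y) ^ (-s) := by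
        rw [← Real.rpow_natCast (y ⬝ᵥ y) 2, ← Real.rpow_add hq]
        norm_num
      calc (y ⬝ᵥ H.mulVec y)^2 * (y ⬝ᵥ y) ^ (-(s+2))
          ≤ CH * (y ⬝ᵥ y)^2 * (y ⬝ᵥ y) ^ (-(s+2)) := by
            apply mul_le_mul_of_nonneg_right hnum (Real.rpow_nonneg (le_of_lt hq) _)
        _ = CH * ((y ⬝ᵥ y) ^ (-s)) := by rw [mul_assoc, hpow]
    have hdecf := decomp_general
      (fun x : {x : Fin n → ℤ // x ≠ 0} => latv P x.1 ⬝ᵥ latv P x.1)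
      (fun x : {x : Fin n → ℤ // x ≠ 0} =>
        (latv P x.1 ⬝ᵥ H.mulVec (latv P x.1)) ^ 2
          * (latv P x.1 ⬝ᵥ latv P x.1) ^ (-(s + 2))) hsumf
    have hdecg := decomp_general
      (fun x : {x : Fin n → ℤ // x ≠ 0} => latv P x.1 ⬝ᵥ latv P x.1)
      (fun x : {x : Fin n → ℤ // x ≠ 0} =>
        (latv P x.1 ⬝ᵥ latv P x.1) ^ (-s)) hsumg
    calc (∑' x : {x : Fin n → ℤ // x ≠ 0},
          (latv P x.1 ⬝ᵥ H.mulVec (latv P x.1)) ^ 2 * (latv P x.1 ⬝ᵥ latv P x.1) ^ (-(s + 2)))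
        = ∑' m : ℝ, ∑' x : {x : {x : Fin n → ℤ // x ≠ 0} | latv P x.1 ⬝ᵥ latv P x.1 = m},
            (latv P x.1.1 ⬝ᵥ H.mulVec (latv P x.1.1)) ^ 2
              * (latv P x.1.1 ⬝ᵥ latv P x.1.1) ^ (-(s + 2)) := hdecf
      _ = ∑' m : ℝ, (H.trace ^ 2 + 2 * (H * H).trace) / ((n : ℝ) * ((n : ℝ) + 2)) *
            ∑' x : {x : {x : Fin n → ℤ // x ≠ 0} | latv P x.1 ⬝ᵥ latv P x.1 = m},
              (latv P x.1.1 ⬝ᵥ latv P x.1.1) ^ (-s) :=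
          tsum_congr (fun m => fiber_eval P hP hn hdesign s H hH m)
      _ = (H.trace ^ 2 + 2 * (H * H).trace) / ((n : ℝ) * ((n : ℝ) + 2)) *
            ∑' m : ℝ, ∑' x : {x : {x : Fin n → ℤ // x ≠ 0} | latv P x.1 ⬝ᵥ latv P x.1 = m},
              (latv P x.1.1 ⬝ᵥ latv P x.1.1) ^ (-s) := tsum_mul_left
      _ = (H.trace ^ 2 + 2 * (H * H).trace) / ((n : ℝ) * ((n : ℝ) + 2)) *
            ∑' x : {x : Fin n → ℤ // x ≠ 0}, (latv P x.1 ⬝ᵥ latv P x.1) ^ (-s) := by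
          rw [← hdecg]
      _ = zetaLat P s / ((n : ℝ) * ((n : ℝ) + 2)) * (H.trace ^ 2 + 2 * (H * H).trace) := by
          rw [zetaLat]
          ring
end

section
/- Let H be a symmetric real n×n matrix and suppose the degree-4 homogeneous polynomial H[x]² decomposes as H[x]² = P₄(x) + ‖x‖² P₂(x) + ‖x‖⁴ P₀, where P₄ and P₂ are harmonic polynomials of degrees 4 and 2 respectively (ΔP₄ = ΔP₂ = 0) and P₀ is a constant. Then P₀ = ((Tr H)² + 2 Tr(H²)) / (n(n+2)). -/
open Matrix

/-- The quadratic form `v ↦ vᵀ B v` associated with a square real matrix `B`. -/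
noncomputable def qf {n : ℕ} (B : Matrix (Fin n) (Fin n) ℝ) (v : Fin n → ℝ) : ℝ :=
  v ⬝ᵥ B.mulVec v

/-- The Euclidean Laplacian `Δf = ∑ᵢ ∂²f/∂xᵢ²` of a function `f : ℝⁿ → ℝ`. -/
noncomputable def lap {n : ℕ} (f : (Fin n → ℝ) → ℝ) : (Fin n → ℝ) → ℝ :=
  fun x => ∑ i, deriv (deriv fun t => f (Function.update x i t)) (x i)

namespace HarmonicAux

open MvPolynomial

variable {n : ℕ}

lemma hasDerivAt_eval_poly (x : Fin n → ℝ) (i : Fin n)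
    (P : MvPolynomial (Fin n) ℝ) (t : ℝ) :
    HasDerivAt (fun s => eval (Function.update x i s) P)
      (eval (Function.update x i t) (pderiv i P)) t := by
  induction P using MvPolynomial.induction_on with
  | C a =>
    simp only [eval_C, pderiv_C, map_zero]
    exact hasDerivAt_const t a
  | add p q hp hq =>
    simpa only [map_add] using hp.fun_add hq
  | mul_X p j hp =>
    by_cases hji : j = i
    · subst hji
      have h := hp.mul (hasDerivAt_id t)
      simp only [eval_mul, eval_X, Function.update_self, pderiv_mul, pderiv_X_self,
        mul_one, map_add, eval_mul, id] at h ⊢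
      exact h
    · have h := hp.mul_const (x j)
      simp only [eval_mul, eval_X, Function.update_of_ne hji, pderiv_mul,
        pderiv_X_of_ne hji, mul_zero, add_zero, map_add, _root_.map_mul] at h ⊢
      exact h

lemma deriv_eval_poly (x : Fin n → ℝ) (i : Fin n) (P : MvPolynomial (Fin n) ℝ) :
    (deriv fun s => eval (Function.update x i s) P)
      = fun t => eval (Function.update x i t) (pderiv i P) := by
  funext t
  exact (hasDerivAt_eval_poly x i P t).deriv

lemma lap_eval_poly (P : MvPolynomial (Fin n) ℝ) (x : Fin n → ℝ) :
    lap (fun v => eval v P) x = eval x (∑ i, pderiv i (pderiv i P)) := by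
  rw [lap, map_sum]
  refine Finset.sum_congr rfl fun i _ => ?_
  rw [deriv_eval_poly x i P, deriv_eval_poly x i (pderiv i P)]
  simp [Function.update_eq_self]

lemma X_mul_pderiv_monomial (i : Fin n) (v : Fin n →₀ ℕ) (a : ℝ) :
    (X i : MvPolynomial (Fin n) ℝ) * pderiv i (monomial v a) = monomial v (a * v i) := by
  rw [pderiv_monomial]
  by_cases h : v i = 0
  · simp [h]
  · have hv : Finsupp.single i 1 + (v - Finsupp.single i 1) = v := by
      ext j
      rw [Finsupp.add_apply, Finsupp.tsub_apply]
      rcases eq_or_ne i j with rfl | hj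
      · simp only [Finsupp.single_eq_same]; omega
      · simp [Finsupp.single_eq_of_ne' hj]
    rw [X, monomial_mul, one_mul, hv]

lemma euler {d : ℕ} {P : MvPolynomial (Fin n) ℝ} (hP : P.IsHomogeneous d) :
    ∑ i, (X i : MvPolynomial (Fin n) ℝ) * pderiv i P = C (d : ℝ) * P := by
  conv_lhs => rw [P.as_sum]
  conv_rhs => rw [P.as_sum]
  rw [Finset.mul_sum]
  simp only [map_sum, Finset.mul_sum]
  rw [Finset.sum_comm]
  refine Finset.sum_congr rfl fun v hv => ?_
  have hdeg : ∑ i, (v i : ℝ) = (d : ℝ) := by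
    have h1 : v.degree = d := by
      rw [Finsupp.degree_eq_weight_one]
      exact hP (MvPolynomial.mem_support_iff.mp hv)
    have h2 : ∑ i, v i = v.degree := by
      rw [Finsupp.degree]
      exact (Finset.sum_subset (Finset.subset_univ _)
        (fun x _ hx => Finsupp.notMem_support_iff.mp hx)).symm
    have h3 : ∑ i, v i = d := h2.trans h1
    rw [← Nat.cast_sum, h3]
  calc ∑ i, (X i : MvPolynomial (Fin n) ℝ) * pderiv i (monomial v (coeff v P))
      = ∑ i, monomial v (coeff v P * v i) := by
        exact Finset.sum_congr rfl fun i _ => X_mul_pderiv_monomial i v _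
    _ = monomial v (coeff v P * ∑ i, (v i : ℝ)) := by
        rw [Finset.mul_sum, map_sum]
    _ = C (d:ℝ) * monomial v (coeff v P) := by
        rw [hdeg, C_mul_monomial, mul_comm]

noncomputable def Dl (P : MvPolynomial (Fin n) ℝ) : MvPolynomial (Fin n) ℝ :=
  ∑ i, pderiv i (pderiv i P)

lemma Dl_add (P Q : MvPolynomial (Fin n) ℝ) : Dl (P + Q) = Dl P + Dl Q := by
  simp [Dl, Finset.sum_add_distrib]

lemma Dl_C_mul (a : ℝ) (P : MvPolynomial (Fin n) ℝ) : Dl (C a * P) = C a * Dl P := by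
  simp [Dl, pderiv_C_mul, Finset.mul_sum]

lemma Dl_mul (A B : MvPolynomial (Fin n) ℝ) :
    Dl (A * B) = Dl A * B + 2 * ∑ i, pderiv i A * pderiv i B + A * Dl B := by
  unfold Dl
  rw [Finset.sum_mul, Finset.mul_sum, Finset.mul_sum, ← Finset.sum_add_distrib,
    ← Finset.sum_add_distrib]
  refine Finset.sum_congr rfl fun i _ => ?_
  rw [pderiv_mul, map_add, pderiv_mul, pderiv_mul]
  ring

lemma Dl_sum {s : Finset (Fin n)} (f : Fin n → MvPolynomial (Fin n) ℝ) :
    Dl (∑ k ∈ s, f k) = ∑ k ∈ s, Dl (f k) := by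
  unfold Dl
  simp only [map_sum]
  exact Finset.sum_comm

lemma Dl_zero : Dl (0 : MvPolynomial (Fin n) ℝ) = 0 := by simp [Dl]

lemma two_eq_C : (2 : MvPolynomial (Fin n) ℝ) = C 2 := by rw [map_ofNat]
lemma four_eq_C : (4 : MvPolynomial (Fin n) ℝ) = C 4 := by rw [map_ofNat]
lemma eight_eq_C : (8 : MvPolynomial (Fin n) ℝ) = C 8 := by rw [map_ofNat]

section Mat
variable (H : Matrix (Fin n) (Fin n) ℝ)

noncomputable def G (k : Fin n) : MvPolynomial (Fin n) ℝ := ∑ j, C (H k j) * X j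

noncomputable def Qp : MvPolynomial (Fin n) ℝ := ∑ i, G H i * X i

lemma pderiv_G (k j : Fin n) : pderiv k (G H j) = C (H j k) := by
  rw [G, map_sum]
  have h : ∀ j' : Fin n, pderiv k (C (H j j') * (X j' : MvPolynomial (Fin n) ℝ))
      = if j' = k then C (H j j') else 0 := by
    intro j'
    rcases eq_or_ne j' k with rfl | hj
    · rw [pderiv_C_mul, pderiv_X_self, mul_one, if_pos rfl]
    · rw [pderiv_C_mul, pderiv_X_of_ne hj, mul_zero, if_neg hj]
  simp only [h]
  rw [Finset.sum_ite_eq' Finset.univ k (fun j' => C (H j j'))]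
  simp

lemma Dl_G (j : Fin n) : Dl (G H j) = 0 := by
  simp [Dl, pderiv_G, pderiv_C]

lemma pderiv_Qp (hH : H.IsSymm) (k : Fin n) : pderiv k (Qp H) = 2 * G H k := by
  rw [Qp, map_sum]
  have h0 : ∀ i, pderiv k (G H i * X i)
      = C (H i k) * X i + if i = k then G H i else 0 := by
    intro i
    rw [pderiv_mul, pderiv_G]
    rcases eq_or_ne i k with rfl | hi
    · rw [pderiv_X_self, mul_one, if_pos rfl]
    · rw [pderiv_X_of_ne hi, mul_zero, if_neg hi]
  simp only [h0]
  rw [Finset.sum_add_distrib]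
  have h1 : ∑ i, C (H i k) * (X i : MvPolynomial (Fin n) ℝ) = G H k := by
    rw [G]; refine Finset.sum_congr rfl fun i _ => ?_; rw [hH.apply]
  have h2 : (∑ i, if i = k then G H i else 0) = G H k := by
    rw [Finset.sum_ite_eq' Finset.univ k (fun i => G H i)]
    simp
  rw [h1, h2]; ring

lemma Dl_Qp (hH : H.IsSymm) : Dl (Qp H) = C (2 * H.trace) := by
  rw [Dl]
  simp only [pderiv_Qp H hH]
  have h0 : ∀ i : Fin n, pderiv i (2 * G H i) = C (2 * H i i) := by
    intro i
    rw [two_eq_C, pderiv_C_mul, pderiv_G, ← C_mul]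
  simp only [h0]
  rw [← map_sum, Matrix.trace, Finset.mul_sum]
  rfl

end Mat

noncomputable def Rp : MvPolynomial (Fin n) ℝ :=
  ∑ i : Fin n, (X i : MvPolynomial (Fin n) ℝ) ^ 2

lemma pderiv_Rp (k : Fin n) : pderiv k (Rp (n := n)) = 2 * X k := by
  rw [Rp, map_sum]
  have h : ∀ j : Fin n, pderiv k ((X j : MvPolynomial (Fin n) ℝ) ^ 2)
      = if j = k then 2 * X k else 0 := by
    intro j
    rcases eq_or_ne j k with rfl | hj
    · rw [pderiv_pow, pderiv_X_self, mul_one, if_pos rfl]; norm_num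
    · rw [pderiv_pow, pderiv_X_of_ne hj, mul_zero, if_neg hj]
  simp only [h]
  rw [Finset.sum_ite_eq' Finset.univ k (fun _ => 2 * (X k : MvPolynomial (Fin n) ℝ))]
  simp

lemma Dl_Rp : Dl (Rp (n := n)) = C (2 * (n : ℝ)) := by
  rw [Dl]
  simp only [pderiv_Rp]
  have h0 : ∀ i : Fin n, pderiv i (2 * (X i : MvPolynomial (Fin n) ℝ)) = C 2 := by
    intro i
    rw [two_eq_C, pderiv_C_mul, pderiv_X_self, mul_one]
  simp only [h0, Finset.sum_const, Finset.card_univ, Fintype.card_fin, nsmul_eq_mul]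
  rw [← C_eq_coe_nat, ← C_mul]
  congr 1
  ring

section Mat2
variable (H : Matrix (Fin n) (Fin n) ℝ)

lemma Dl_G_sq (k : Fin n) : Dl (G H k * G H k) = C (2 * ∑ i, H k i ^ 2) := by
  rw [Dl_mul, Dl_G, zero_mul, zero_add, mul_zero, add_zero]
  have h : ∀ i : Fin n, pderiv i (G H k) * pderiv i (G H k) = C (H k i ^ 2) := by
    intro i; rw [pderiv_G, ← C_mul, sq]
  simp only [h]
  rw [← map_sum, two_eq_C, ← C_mul]

lemma Dl_Qp_sq (hH : H.IsSymm) :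
    Dl (Qp H * Qp H) = C (4 * H.trace) * Qp H + C 8 * ∑ k, G H k * G H k := by
  rw [Dl_mul, Dl_Qp H hH]
  have h : ∑ i, pderiv i (Qp H) * pderiv i (Qp H) = 4 * ∑ k, G H k * G H k := by
    rw [Finset.mul_sum]
    refine Finset.sum_congr rfl fun i _ => ?_
    rw [pderiv_Qp H hH]; ring
  rw [h]
  have c1 : (C (4 * H.trace) : MvPolynomial (Fin n) ℝ) = 4 * C H.trace := by
    rw [C_mul, ← four_eq_C]
  have c2 : (C (2 * H.trace) : MvPolynomial (Fin n) ℝ) = 2 * C H.trace := by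
    rw [C_mul, ← two_eq_C]
  rw [c1, c2, ← eight_eq_C]
  ring

lemma Dl2_Qp_sq (hH : H.IsSymm) :
    Dl (Dl (Qp H * Qp H)) = C (8 * H.trace ^ 2 + 16 * ∑ k, ∑ i, H k i ^ 2) := by
  rw [Dl_Qp_sq H hH, Dl_add, Dl_C_mul, Dl_C_mul, Dl_Qp H hH, Dl_sum]
  simp only [Dl_G_sq]
  rw [← map_sum, ← C_mul, ← C_mul, ← map_add]
  congr 1
  rw [← Finset.mul_sum]
  ring

lemma Dl_Rp_sq : Dl (Rp (n := n) * Rp) = C (4 * (n:ℝ) + 8) * Rp := by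
  rw [Dl_mul, Dl_Rp]
  have h : ∑ i, pderiv i (Rp (n := n)) * pderiv i (Rp (n := n)) = 4 * Rp := by
    simp only [pderiv_Rp]
    rw [Rp, Finset.mul_sum]
    exact Finset.sum_congr rfl fun i _ => by ring
  rw [h, show (4 * (n:ℝ) + 8) = 2 * n + (2 * n + 8) by ring, map_add, map_add,
    map_ofNat]
  ring

end Mat2

lemma Dl_Rp_mul {P₂ : MvPolynomial (Fin n) ℝ} (h2 : P₂.IsHomogeneous 2)
    (hDP2 : Dl P₂ = 0) :
    Dl (Rp (n := n) * P₂) = C (2 * (n:ℝ) + 8) * P₂ := by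
  rw [Dl_mul, Dl_Rp, hDP2, mul_zero, add_zero]
  have he := euler h2
  have h : ∑ i, pderiv i (Rp (n := n)) * pderiv i P₂ = 2 * (C ((2:ℕ) : ℝ) * P₂) := by
    rw [← he, Finset.mul_sum]
    simp only [pderiv_Rp]
    exact Finset.sum_congr rfl fun i _ => by ring
  rw [h, map_add, map_ofNat, Nat.cast_ofNat, ← two_eq_C]
  ring

end HarmonicAux

open HarmonicAux MvPolynomial in
/-- If the degree-4 polynomial `H[x]²` (with `H` symmetric) decomposes as
`H[x]² = P₄(x) + ‖x‖² P₂(x) + ‖x‖⁴ P₀` with `P₄, P₂` harmonic homogeneous polynomials of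
degrees 4 and 2 and `P₀` a constant, then `P₀ = ((Tr H)² + 2 Tr(H²))/(n(n+2))`. -/
theorem constant_term_of_harmonic_decomposition
    {n : ℕ} (hn : 0 < n) (H : Matrix (Fin n) (Fin n) ℝ) (hH : H.IsSymm)
    (P₄ P₂ : MvPolynomial (Fin n) ℝ) (P₀ : ℝ)
    (h4 : P₄.IsHomogeneous 4) (h2 : P₂.IsHomogeneous 2)
    (harm4 : ∀ x : Fin n → ℝ, lap (fun v => MvPolynomial.eval v P₄) x = 0)
    (harm2 : ∀ x : Fin n → ℝ, lap (fun v => MvPolynomial.eval v P₂) x = 0)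
    (hdecomp : ∀ x : Fin n → ℝ,
      (qf H x) ^ 2 = MvPolynomial.eval x P₄ + (x ⬝ᵥ x) * MvPolynomial.eval x P₂
        + (x ⬝ᵥ x) ^ 2 * P₀) :
    P₀ = (H.trace ^ 2 + 2 * (H * H).trace) / ((n : ℝ) * ((n : ℝ) + 2)) := by
  have hDP4 : Dl P₄ = 0 :=
    MvPolynomial.funext fun x => by rw [Dl, ← lap_eval_poly, harm4 x, map_zero]
  have hDP2 : Dl P₂ = 0 :=
    MvPolynomial.funext fun x => by rw [Dl, ← lap_eval_poly, harm2 x, map_zero]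
  have eval_Qp : ∀ x : Fin n → ℝ, eval x (Qp H) = qf H x := by
    intro x
    simp only [Qp, G, map_sum, eval_mul, eval_C, eval_X, qf, dotProduct,
      Matrix.mulVec, Finset.sum_mul]
    refine Finset.sum_congr rfl fun i _ => ?_
    rw [Finset.mul_sum]
    exact Finset.sum_congr rfl fun j _ => by ring
  have eval_Rp : ∀ x : Fin n → ℝ, eval x (Rp (n := n)) = x ⬝ᵥ x := by
    intro x
    simp [Rp, dotProduct, sq]
  have hpoly : Qp H * Qp H = P₄ + Rp * P₂ + C P₀ * (Rp * Rp) := by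
    refine MvPolynomial.funext fun x => ?_
    simp only [map_add, eval_mul, eval_C, eval_Qp, eval_Rp]
    have h := hdecomp x
    rw [← sq, h]
    ring
  have htr : (H * H).trace = ∑ k, ∑ i, H k i ^ 2 := by
    rw [Matrix.trace]
    refine Finset.sum_congr rfl fun k _ => ?_
    rw [Matrix.diag_apply, Matrix.mul_apply]
    exact Finset.sum_congr rfl fun j _ => by rw [hH.apply k j, sq]
  have e : (C (8 * H.trace ^ 2 + 16 * ∑ k, ∑ i, H k i ^ 2) : MvPolynomial (Fin n) ℝ)
      = C P₀ * (C (4 * (n:ℝ) + 8) * C (2 * (n:ℝ))) := by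
    calc (C (8 * H.trace ^ 2 + 16 * ∑ k, ∑ i, H k i ^ 2) : MvPolynomial (Fin n) ℝ)
        = Dl (Dl (Qp H * Qp H)) := (Dl2_Qp_sq H hH).symm
      _ = Dl (Dl (P₄ + Rp * P₂ + C P₀ * (Rp * Rp))) := by rw [hpoly]
      _ = C P₀ * (C (4 * (n:ℝ) + 8) * C (2 * (n:ℝ))) := by
          have step1 : Dl (P₄ + Rp * P₂ + C P₀ * (Rp * Rp))
              = C (2 * (n:ℝ) + 8) * P₂ + C P₀ * (C (4 * (n:ℝ) + 8) * Rp) := by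
            rw [Dl_add, Dl_add, hDP4, Dl_Rp_mul h2 hDP2, Dl_C_mul, Dl_Rp_sq,
              zero_add]
          rw [step1, Dl_add, Dl_C_mul, hDP2, mul_zero, Dl_C_mul, Dl_C_mul,
            Dl_Rp, zero_add]
  have er : 8 * H.trace ^ 2 + 16 * ∑ k, ∑ i, H k i ^ 2
      = P₀ * ((4 * (n:ℝ) + 8) * (2 * (n:ℝ))) := by
    have := congrArg (eval (fun _ => 0 : Fin n → ℝ)) e
    simpa only [eval_C, eval_mul] using this
  have hnpos : (0:ℝ) < (n:ℝ) := by exact_mod_cast hn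
  have hne : (n:ℝ) * ((n:ℝ) + 2) ≠ 0 := by positivity
  rw [eq_div_iff hne, htr]
  linear_combination (-1/8 : ℝ) * er
end
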